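/- arXiv:1408.2389 — 10 statements merged into one kernel-verified Lean document; each statement's English description precedes it below -/
import Mathlib

section
/- Let N be a norm on ℂᵐ with open unit ball B = {z : N(z) < 1}. Then the set of continuous linear functionals {Df(0) : f holomorphic on B with |f| < 1 on B and f(0) = 0} equals the closed unit ball of the dual norm, i.e. the set {ℓ : ℂᵐ → ℂ linear : |ℓ(v)| ≤ N(v) for all v ∈ ℂᵐ}. -/
/-!
The axioms on `N` say exactly that it is a seminorm `p`. Every `ℓ` with `‖ℓ v‖ ≤ p v` is its own
witness. Conversely, if `f` maps the unit `p`-ball to the unit disc with `f 0 = 0` and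
`p v < c`, then `w ↦ f (w • v)` maps the disc of radius `c⁻¹` to the unit disc, so the Schwarz
lemma bounds its derivative `ℓ v` at `0` by `c`. Letting `c` decrease to `p v` gives
`‖ℓ v‖ ≤ p v`; this also covers the degenerate directions where `p v = 0`.
-/

open Set

namespace Seminorm

variable {E : Type*} [NormedAddCommGroup E] [NormedSpace ℂ E]

theorem norm_apply_le_of_hasFDerivAt_zero (p : Seminorm ℂ E) {f : E → ℂ} {ℓ : E →L[ℂ] ℂ}
    (hf : DifferentiableOn ℂ f (p.ball 0 1)) (hmaps : MapsTo f (p.ball 0 1) (Metric.ball 0 1))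
    (hf0 : f 0 = 0) (hℓ : HasFDerivAt f ℓ 0) (v : E) : ‖ℓ v‖ ≤ p v := by
  refine le_of_forall_gt_imp_ge_of_dense fun c hc => ?_
  have hc0 : 0 < c := (apply_nonneg p v).trans_lt hc
  have hline : MapsTo (fun w : ℂ => w • v) (Metric.ball 0 c⁻¹) (p.ball 0 1) := by
    intro w hw
    rw [mem_ball_zero_iff] at hw
    rw [mem_ball_zero, map_smul_eq_mul]
    calc ‖w‖ * p v ≤ c⁻¹ * p v := by gcongr
      _ < c⁻¹ * c := by gcongr
      _ = 1 := inv_mul_cancel₀ hc0.ne'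
  have hderiv : HasDerivAt (f ∘ fun w : ℂ => w • v) (ℓ v) 0 := by
    simpa using hℓ.comp_hasDerivAt_of_eq (0 : ℂ) ((hasDerivAt_id (0 : ℂ)).smul_const v)
      (zero_smul ℂ v).symm
  have hschwarz := Complex.norm_deriv_le_div_of_mapsTo_ball (R₂ := 1)
    (hf.comp (differentiable_id.smul_const v).differentiableOn hline)
    (fun w hw => by simpa [hf0] using Metric.ball_subset_closedBall (hmaps (hline hw)))
    (inv_pos.2 hc0)
  rwa [hderiv.deriv, one_div, inv_inv] at hschwarz

end Seminorm

theorem stmt5_general {m : ℕ} (N : (Fin m → ℂ) → ℝ)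
    (hNsmul : ∀ (a : ℂ) (z : Fin m → ℂ), N (a • z) = ‖a‖ * N z)
    (hNadd : ∀ z w, N (z + w) ≤ N z + N w) :
    {ℓ : (Fin m → ℂ) →L[ℂ] ℂ |
        ∃ f : (Fin m → ℂ) → ℂ,
          DifferentiableOn ℂ f {z | N z < 1} ∧
          (∀ z, N z < 1 → ‖f z‖ < 1) ∧ f 0 = 0 ∧ HasFDerivAt f ℓ 0}
      = {ℓ : (Fin m → ℂ) →L[ℂ] ℂ | ∀ v, ‖ℓ v‖ ≤ N v} := by
  let p : Seminorm ℂ (Fin m → ℂ) := Seminorm.of N hNadd hNsmul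
  have hball : p.ball 0 1 = {z | N z < 1} := p.ball_zero_eq
  ext ℓ
  constructor
  · rintro ⟨f, hf, hbound, hf0, hℓ⟩
    refine p.norm_apply_le_of_hasFDerivAt_zero (hball ▸ hf) ?_ hf0 hℓ
    exact fun z hz => mem_ball_zero_iff.2 (hbound z (p.mem_ball_zero.1 hz))
  · intro hℓ
    exact ⟨ℓ, ℓ.differentiable.differentiableOn, fun z hz => (hℓ z).trans_lt hz, map_zero ℓ,
      ℓ.hasFDerivAt⟩

/-- For a norm `N` on `ℂᵐ` with open unit ball `B = {z : N z < 1}`, the set of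
derivatives at `0` of holomorphic maps `f : B → 𝔻` with `f 0 = 0` is exactly the closed
unit ball of the dual norm. -/
theorem stmt5 {m : ℕ} (N : (Fin m → ℂ) → ℝ)
    (hN0 : ∀ z, N z = 0 ↔ z = 0)
    (hNsmul : ∀ (a : ℂ) (z : Fin m → ℂ), N (a • z) = ‖a‖ * N z)
    (hNadd : ∀ z w, N (z + w) ≤ N z + N w) :
    {ℓ : (Fin m → ℂ) →L[ℂ] ℂ |
        ∃ f : (Fin m → ℂ) → ℂ,
          DifferentiableOn ℂ f {z | N z < 1} ∧
          (∀ z, N z < 1 → ‖f z‖ < 1) ∧ f 0 = 0 ∧ HasFDerivAt f ℓ 0}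
      = {ℓ : (Fin m → ℂ) →L[ℂ] ℂ | ∀ v, ‖ℓ v‖ ≤ N v} :=
  stmt5_general N hNsmul hNadd
end

section
/- For α, β ∈ ℂ, the supremum of |αx + βy| over all (x,y) ∈ ℂ² with |x|² + |y| ≤ 1 equals (|α|² + 4|β|²)/(4|β|) if β ≠ 0 and |α| ≤ 2|β|, and equals |α| otherwise. (This computes the norm dual to the norm on ℂ² whose unit ball is {(x,y) : |x|² + |y| < 1}.) -/
/-!
Bounding `‖αx + βy‖ ≤ ‖α‖‖x‖ + ‖β‖‖y‖ ≤ ‖α‖t + ‖β‖(1 - t²)` with `t = ‖x‖ ∈ [0, 1]`, and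
noting that rotating `x` and `y` turns both inequalities into equalities, the supremum is the
maximum of the concave quadratic `t ↦ ‖α‖t + ‖β‖(1 - t²)` on `[0, 1]`. Its vertex
`t = ‖α‖/(2‖β‖)` lies in `[0, 1]` exactly when `‖α‖ ≤ 2‖β‖`; otherwise the maximum is at `t = 1`.
-/

open Set

def ballProfile (a b t : ℝ) : ℝ := a * t + b * (1 - t ^ 2)

lemma isGreatest_ballProfile_of_le_two_mul {a b : ℝ} (ha : 0 ≤ a) (hb : 0 < b)
    (hab : a ≤ 2 * b) :
    IsGreatest (ballProfile a b '' Icc 0 1) ((a ^ 2 + 4 * b ^ 2) / (4 * b)) := by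
  refine ⟨⟨a / (2 * b), ⟨by positivity, (div_le_one (by positivity)).2 hab⟩, ?_⟩, ?_⟩
  · unfold ballProfile
    field_simp
    ring
  · rintro _ ⟨t, -, rfl⟩
    rw [ballProfile, le_div_iff₀ (by positivity)]
    -- the gap is `(a - 2bt)² / (4b)`
    nlinarith [sq_nonneg (a - 2 * b * t)]

lemma isGreatest_ballProfile_of_two_mul_le {a b : ℝ} (hb : 0 ≤ b) (hab : 2 * b ≤ a) :
    IsGreatest (ballProfile a b '' Icc 0 1) a := by
  refine ⟨⟨1, right_mem_Icc.2 zero_le_one, by simp [ballProfile]⟩, ?_⟩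
  rintro _ ⟨t, ⟨ht0, ht1⟩, rfl⟩
  rw [ballProfile]
  -- the gap is `(1 - t)(a - 2b) + b(1 - t)²`
  nlinarith [mul_nonneg (sub_nonneg.2 ht1) (sub_nonneg.2 hab),
    mul_nonneg (sub_nonneg.2 ht1) (mul_nonneg hb (sub_nonneg.2 ht1))]

section RCLike

variable {𝕜 : Type*} [RCLike 𝕜]

lemma exists_norm_mul_add_mul_eq (α β : 𝕜) {t s : ℝ} (ht : 0 ≤ t) (hs : 0 ≤ s) :
    ∃ x y : 𝕜, ‖x‖ = t ∧ ‖y‖ = s ∧ ‖α * x + β * y‖ = ‖α‖ * t + ‖β‖ * s := by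
  obtain ⟨u, hu, hαu⟩ := RCLike.exists_norm_eq_mul_self α
  obtain ⟨v, hv, hβv⟩ := RCLike.exists_norm_eq_mul_self β
  refine ⟨t * u, s * v, by simp [hu, ht], by simp [hv, hs], ?_⟩
  have hsum : α * (t * u) + β * (s * v) = ((‖α‖ * t + ‖β‖ * s : ℝ) : 𝕜) := by
    push_cast
    linear_combination -(t : 𝕜) * hαu - (s : 𝕜) * hβv
  rw [hsum, RCLike.norm_ofReal, abs_of_nonneg (by positivity)]

lemma isGreatest_norm_mul_add_mul_of_isGreatest_ballProfile (α β : 𝕜) {M : ℝ}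
    (hM : IsGreatest (ballProfile ‖α‖ ‖β‖ '' Icc 0 1) M) :
    IsGreatest {r : ℝ | ∃ x y : 𝕜, ‖x‖ ^ 2 + ‖y‖ ≤ 1 ∧ r = ‖α * x + β * y‖} M := by
  constructor
  · obtain ⟨t, ⟨ht0, ht1⟩, rfl⟩ := hM.1
    obtain ⟨x, y, hx, hy, hxy⟩ :=
      exists_norm_mul_add_mul_eq α β ht0 (by nlinarith : 0 ≤ 1 - t ^ 2)
    exact ⟨x, y, by rw [hx, hy]; linarith, by rw [hxy, ballProfile]⟩
  · rintro _ ⟨x, y, hxy, rfl⟩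
    have hx1 : ‖x‖ ≤ 1 := by nlinarith [norm_nonneg x, norm_nonneg y]
    calc ‖α * x + β * y‖ ≤ ‖α‖ * ‖x‖ + ‖β‖ * ‖y‖ := by
          simpa only [norm_mul] using norm_add_le (α * x) (β * y)
      _ ≤ ballProfile ‖α‖ ‖β‖ ‖x‖ := by
          rw [ballProfile]
          gcongr
          linarith
      _ ≤ M := hM.2 ⟨‖x‖, ⟨norm_nonneg x, hx1⟩, rfl⟩

end RCLike

/-- The dual norm of the linear functional `(x,y) ↦ αx + βy` with respect to the norm on
`ℂ²` whose closed unit ball is `{(x,y) : |x|² + |y| ≤ 1}`: the supremum of `|αx + βy|`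
over that ball equals `(|α|² + 4|β|²)/(4|β|)` when `β ≠ 0` and `|α| ≤ 2|β|`, and equals
`|α|` otherwise. -/
theorem stmt6 (α β : ℂ) :
    ((β ≠ 0 ∧ ‖α‖ ≤ 2 * ‖β‖) →
      sSup {r : ℝ | ∃ x y : ℂ, ‖x‖ ^ 2 + ‖y‖ ≤ 1 ∧ r = ‖α * x + β * y‖}
        = (‖α‖ ^ 2 + 4 * ‖β‖ ^ 2) / (4 * ‖β‖)) ∧
    (¬(β ≠ 0 ∧ ‖α‖ ≤ 2 * ‖β‖) →
      sSup {r : ℝ | ∃ x y : ℂ, ‖x‖ ^ 2 + ‖y‖ ≤ 1 ∧ r = ‖α * x + β * y‖}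
        = ‖α‖) := by
  constructor
  · rintro ⟨hβ, hαβ⟩
    exact (isGreatest_norm_mul_add_mul_of_isGreatest_ballProfile α β
      (isGreatest_ballProfile_of_le_two_mul (norm_nonneg α) (norm_pos_iff.2 hβ) hαβ)).csSup_eq
  · intro h
    have hβα : 2 * ‖β‖ ≤ ‖α‖ := by
      by_cases hβ : β = 0
      · simp [hβ]
      · exact (not_le.1 fun hαβ ↦ h ⟨hβ, hαβ⟩).le
    exact (isGreatest_norm_mul_add_mul_of_isGreatest_ballProfile α β
      (isGreatest_ballProfile_of_two_mul_le (norm_nonneg β) hβα)).csSup_eq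
end

section
/- Let v₁ = (v₁₁, v₁₂), v₂ = (v₂₁, v₂₂) ∈ ℂ², and let S be the 2×4 complex matrix with first row (v₁₁, v₁₂, v₂₁, v₂₂) and second row (0, 0, v₁₁, v₁₂) (that is, S = I₂ ⊗ v₁ + E₁₂ ⊗ v₂, where E₁₂ is the 2×2 matrix unit with 1 in position (1,2)). Then ‖S‖_op² equals the operator norm of the 2×2 Hermitian matrix [[‖v₁‖² + ‖v₂‖², ⟨v₂, v₁⟩],[⟨v₁, v₂⟩, ‖v₁‖²]], which equals (2‖v₁‖² + ‖v₂‖² + √(‖v₂‖⁴ + 4|⟨v₁,v₂⟩|²))/2. -/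
/-!
`S Sᴴ` is the Hermitian matrix `H` of the statement, so the C⋆-identity `‖Sᴴ‖² = ‖S Sᴴ‖` gives
the first equality. For a Hermitian `2 × 2` matrix with trace `t ≥ 0` and determinant `d`, one of
`±‖H‖` lies in the spectrum, i.e. is a root of `k² - t k + d`; every real root has absolute value
at most the larger root `(t + √(t² - 4d)) / 2`, and that root is itself in the spectrum.
-/

open scoped Kronecker

/-- The operator norm of a complex matrix, viewed as a linear map between
Euclidean spaces (standard `ℓ²` norms). -/
noncomputable def opNorm {m n : Type*} [Fintype m] [Fintype n] [DecidableEq n]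
    (M : Matrix m n ℂ) : ℝ :=
  ‖LinearMap.toContinuousLinearMap (Matrix.toEuclideanLin M)‖

open scoped Matrix.Norms.L2Operator
open Matrix

lemma opNorm_eq_norm {m n : Type*} [Fintype m] [Fintype n] [DecidableEq n]
    (M : Matrix m n ℂ) : opNorm M = ‖M‖ := rfl

lemma opNorm_sq_eq_opNorm_mul_conjTranspose {m n : Type*} [Fintype m] [Fintype n]
    [DecidableEq m] [DecidableEq n] (M : Matrix m n ℂ) : opNorm M ^ 2 = opNorm (M * Mᴴ) := by
  rw [opNorm_eq_norm, opNorm_eq_norm, ← l2_opNorm_conjTranspose M, sq,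
    ← l2_opNorm_conjTranspose_mul_self, conjTranspose_conjTranspose]

lemma abs_le_of_sq_sub_mul_add_eq_zero {t d k : ℝ} (ht : 0 ≤ t) (hk : k ^ 2 - t * k + d = 0) :
    |k| ≤ (t + √(t ^ 2 - 4 * d)) / 2 := by
  have hdisc : t ^ 2 - 4 * d = (2 * k - t) ^ 2 := by linear_combination (-4) * hk
  rw [hdisc, Real.sqrt_sq_eq_abs]
  cases abs_cases k <;> cases abs_cases (2 * k - t) <;> linarith

lemma charpoly_eval_hermitian_fin_two (p r : ℝ) (q : ℂ) (k : ℂ) :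
    (!![(p : ℂ), starRingEnd ℂ q; q, (r : ℂ)]).charpoly.eval k
      = k ^ 2 - (p + r) * k + (p * r - ‖q‖ ^ 2 : ℝ) := by
  rw [charpoly_fin_two, trace_fin_two_of, det_fin_two_of, mul_comm (starRingEnd ℂ q),
    Complex.mul_conj, Complex.normSq_eq_norm_sq]
  simp

lemma opNorm_hermitian_fin_two {p r : ℝ} (q : ℂ) (h : 0 ≤ p + r) :
    opNorm !![(p : ℂ), starRingEnd ℂ q; q, (r : ℂ)]
      = (p + r + √((p - r) ^ 2 + 4 * ‖q‖ ^ 2)) / 2 := by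
  set H : Matrix (Fin 2) (Fin 2) ℂ := !![(p : ℂ), starRingEnd ℂ q; q, (r : ℂ)]
  have hH : IsSelfAdjoint H := by
    ext i j
    fin_cases i <;> fin_cases j <;> simp [H]
  have hroot : ∀ k ∈ spectrum ℝ H, k ^ 2 - (p + r) * k + (p * r - ‖q‖ ^ 2) = 0 := by
    intro k hk
    rw [← spectrum.algebraMap_mem_iff ℂ, Matrix.mem_spectrum_iff_isRoot_charpoly,
      Polynomial.IsRoot, charpoly_eval_hermitian_fin_two, Complex.coe_algebraMap] at hk
    exact_mod_cast hk
  rw [opNorm_eq_norm]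
  apply le_antisymm
  · rw [show (p - r) ^ 2 + 4 * ‖q‖ ^ 2 = (p + r) ^ 2 - 4 * (p * r - ‖q‖ ^ 2) by ring]
    rcases CStarAlgebra.norm_or_neg_norm_mem_spectrum hH with hk | hk <;>
      simpa using abs_le_of_sq_sub_mul_add_eq_zero h (hroot _ hk)
  · set lam := (p + r + √((p - r) ^ 2 + 4 * ‖q‖ ^ 2)) / 2
    have hs : √((p - r) ^ 2 + 4 * ‖q‖ ^ 2) ^ 2 = (p - r) ^ 2 + 4 * ‖q‖ ^ 2 :=
      Real.sq_sqrt (by positivity)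
    have hlam_root : lam ^ 2 - (p + r) * lam + (p * r - ‖q‖ ^ 2) = 0 := by
      linear_combination (1 / 4 : ℝ) * hs
    have hlam : (lam : ℂ) ∈ spectrum ℂ H := by
      rw [Matrix.mem_spectrum_iff_isRoot_charpoly, Polynomial.IsRoot,
        charpoly_eval_hermitian_fin_two]
      exact_mod_cast hlam_root
    have hlam0 : 0 ≤ lam := by positivity
    simpa [abs_of_nonneg hlam0] using spectrum.norm_le_norm_of_mem hlam

/-- For `S = I₂ ⊗ v₁ + E₁₂ ⊗ v₂`, i.e. the 2×4 matrix with rows `(v₁₁,v₁₂,v₂₁,v₂₂)` and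
`(0,0,v₁₁,v₁₂)`, the squared operator norm equals the operator norm of the Hermitian
matrix `[[‖v₁‖²+‖v₂‖², ⟨v₂,v₁⟩],[⟨v₁,v₂⟩, ‖v₁‖²]]`, which equals
`(2‖v₁‖² + ‖v₂‖² + √(‖v₂‖⁴ + 4|⟨v₁,v₂⟩|²))/2`. -/
theorem stmt8 (v11 v12 v21 v22 : ℂ) :
    opNorm !![v11, v12, v21, v22; 0, 0, v11, v12] ^ 2
        = opNorm !![((‖v11‖ ^ 2 + ‖v12‖ ^ 2 + ‖v21‖ ^ 2 + ‖v22‖ ^ 2 : ℝ) : ℂ),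
              v21 * (starRingEnd ℂ) v11 + v22 * (starRingEnd ℂ) v12;
              v11 * (starRingEnd ℂ) v21 + v12 * (starRingEnd ℂ) v22,
              ((‖v11‖ ^ 2 + ‖v12‖ ^ 2 : ℝ) : ℂ)] ∧
    opNorm !![v11, v12, v21, v22; 0, 0, v11, v12] ^ 2
        = (2 * (‖v11‖ ^ 2 + ‖v12‖ ^ 2) + (‖v21‖ ^ 2 + ‖v22‖ ^ 2)
            + Real.sqrt ((‖v21‖ ^ 2 + ‖v22‖ ^ 2) ^ 2
                + 4 * ‖v11 * (starRingEnd ℂ) v21 + v12 * (starRingEnd ℂ) v22‖ ^ 2)) / 2 := by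
  set a := ‖v11‖ ^ 2 + ‖v12‖ ^ 2
  set q := v11 * starRingEnd ℂ v21 + v12 * starRingEnd ℂ v22
  set S := !![v11, v12, v21, v22; 0, 0, v11, v12]
  have hgram : S * Sᴴ
      = !![((a + ‖v21‖ ^ 2 + ‖v22‖ ^ 2 : ℝ) : ℂ), starRingEnd ℂ q; q, (a : ℂ)] := by
    ext i j
    fin_cases i <;> fin_cases j <;>
      simp [S, a, q, mul_apply, Fin.sum_univ_four, Complex.mul_conj, Complex.normSq_eq_norm_sq]
    ring
  have hconj : starRingEnd ℂ q = v21 * starRingEnd ℂ v11 + v22 * starRingEnd ℂ v12 := by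
    simp [q, mul_comm]
  have hS := opNorm_sq_eq_opNorm_mul_conjTranspose S
  rw [hgram] at hS
  rw [← hconj]
  refine ⟨hS, ?_⟩
  rw [hS, opNorm_hermitian_fin_two q (by positivity)]
  ring_nf
end

section
/- The following two facts hold, exhibiting a contractive homomorphism of the algebra O(Ω_A), A = (I₂, E₁₂), which is not completely contractive: (a) for all (x,y) ∈ ℂ² with |x|² + |y|² ≤ 1, the operator norm of the 2×2 matrix [[x/√2, y],[0, x/√2]] is at most 1; (b) the 2×4 complex matrix with first row (1/√2, 0, 0, 1) and second row (0, 0, 1/√2, 0) has operator norm squared equal to 3/2, which is strictly greater than 1. -/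
/-!
(a) The operator norm is bounded by the Hilbert–Schmidt norm, which for
`[[x/√2, y], [0, x/√2]]` is `√(|x|² + |y|²)`.
(b) The C*-identity gives `‖N‖² = ‖N Nᴴ‖`, and since the rows of `N` are orthogonal, `N Nᴴ` is
diagonal with entries `|c|² + 1` and `|c|²`, where `c = 1/√2`.
-/

open scoped Kronecker

open scoped Matrix Matrix.Norms.L2Operator

namespace Matrix

variable {𝕜 m n : Type*} [RCLike 𝕜] [Fintype m] [Fintype n] [DecidableEq n]

lemma l2_opNorm_mul_conjTranspose_self [DecidableEq m] (A : Matrix m n 𝕜) :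
    ‖A * Aᴴ‖ = ‖A‖ * ‖A‖ := by
  simpa only [conjTranspose_conjTranspose, l2_opNorm_conjTranspose] using
    l2_opNorm_conjTranspose_mul_self Aᴴ

lemma l2_opNorm_le_sqrt_sum_norm_sq (A : Matrix m n 𝕜) :
    ‖A‖ ≤ √(∑ i, ∑ j, ‖A i j‖ ^ 2) := by
  rw [l2_opNorm_def]
  refine ContinuousLinearMap.opNorm_le_bound _ (Real.sqrt_nonneg _) fun v ↦ ?_
  rw [← Real.sqrt_sq (norm_nonneg v), ← Real.sqrt_mul (by positivity), EuclideanSpace.norm_eq]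
  refine Real.sqrt_le_sqrt ?_
  rw [EuclideanSpace.norm_sq_eq, Finset.sum_mul]
  refine Finset.sum_le_sum fun i _ ↦ ?_
  calc ‖(A *ᵥ v.ofLp) i‖ ^ 2 ≤ (∑ j, ‖A i j‖ * ‖v j‖) ^ 2 := by
        gcongr
        exact (norm_sum_le _ _).trans_eq (by simp only [norm_mul])
    _ ≤ (∑ j, ‖A i j‖ ^ 2) * ∑ j, ‖v j‖ ^ 2 := Finset.sum_mul_sq_le_sq_mul_sq _ _ _

end Matrix

lemma opNorm_eq_l2_opNorm {m n : Type*} [Fintype m] [Fintype n] [DecidableEq n]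
    (A : Matrix m n ℂ) : opNorm A = ‖A‖ := rfl

lemma norm_div_sqrt_two_sq (x : ℂ) : ‖x / (√2 : ℂ)‖ ^ 2 = ‖x‖ ^ 2 / 2 := by
  rw [norm_div, div_pow, Complex.norm_real, Real.norm_of_nonneg (Real.sqrt_nonneg 2),
    Real.sq_sqrt zero_le_two]

lemma norm_vec_two_ofReal {a b : ℝ} (hb : 0 ≤ b) (hba : b ≤ a) : ‖![(a : ℂ), b]‖ = a := by
  have ha : 0 ≤ a := hb.trans hba
  refine le_antisymm ((pi_norm_le_iff_of_nonneg ha).2 fun i ↦ ?_) ?_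
  · fin_cases i <;> simp [abs_of_nonneg ha, abs_of_nonneg hb, hba]
  · simpa [abs_of_nonneg ha] using norm_le_pi_norm ![(a : ℂ), b] 0

lemma opNorm_le_one_of_norm_sq_add_norm_sq_le_one {x y : ℂ} (h : ‖x‖ ^ 2 + ‖y‖ ^ 2 ≤ 1) :
    opNorm !![x / (√2 : ℂ), y; 0, x / (√2 : ℂ)] ≤ 1 := by
  refine (Matrix.l2_opNorm_le_sqrt_sum_norm_sq _).trans (Real.sqrt_le_one.mpr ?_)
  simp only [Fin.sum_univ_two, Matrix.of_apply, Matrix.cons_val', Matrix.cons_val_zero,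
    Matrix.cons_val_one, Matrix.empty_val', Matrix.cons_val_fin_one, norm_zero,
    norm_div_sqrt_two_sq]
  linarith

lemma opNorm_sq_eq_norm_sq_add_one (c : ℂ) :
    opNorm !![c, 0, 0, 1; 0, 0, c, 0] ^ 2 = ‖c‖ ^ 2 + 1 := by
  have hdiag : !![c, 0, 0, 1; 0, 0, c, 0] * !![c, 0, 0, 1; 0, 0, c, 0]ᴴ =
      Matrix.diagonal ![((‖c‖ ^ 2 + 1 : ℝ) : ℂ), ((‖c‖ ^ 2 : ℝ) : ℂ)] := by
    ext i j
    fin_cases i <;> fin_cases j <;>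
      simp [Matrix.mul_apply, Fin.sum_univ_four, Complex.mul_conj, Complex.normSq_eq_norm_sq]
  rw [opNorm_eq_l2_opNorm, sq, ← Matrix.l2_opNorm_mul_conjTranspose_self, hdiag,
    Matrix.l2_opNorm_diagonal, norm_vec_two_ofReal (sq_nonneg _) (by linarith)]

/-- A contractive but not completely contractive homomorphism on `𝒪(Ω_A)`, `A = (I₂, E₁₂)`:
(a) for `|x|² + |y|² ≤ 1`, `‖[[x/√2, y],[0, x/√2]]‖ ≤ 1`;
(b) the 2×4 matrix with rows `(1/√2, 0, 0, 1)` and `(0, 0, 1/√2, 0)` has squared operator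
norm `3/2 > 1`. -/
theorem stmt9 :
    (∀ x y : ℂ, ‖x‖ ^ 2 + ‖y‖ ^ 2 ≤ 1 →
      opNorm !![x / (Real.sqrt 2 : ℂ), y; 0, x / (Real.sqrt 2 : ℂ)] ≤ 1) ∧
    opNorm !![(1 / (Real.sqrt 2 : ℂ)), 0, 0, 1;
              0, 0, (1 / (Real.sqrt 2 : ℂ)), 0] ^ 2 = 3 / 2 ∧
    1 < opNorm !![(1 / (Real.sqrt 2 : ℂ)), 0, 0, 1;
              0, 0, (1 / (Real.sqrt 2 : ℂ)), 0] ^ 2 := by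
  have hN : opNorm !![(1 / (Real.sqrt 2 : ℂ)), 0, 0, 1;
      0, 0, (1 / (Real.sqrt 2 : ℂ)), 0] ^ 2 = 3 / 2 := by
    rw [opNorm_sq_eq_norm_sq_add_one, norm_div_sqrt_two_sq, norm_one]
    norm_num
  exact ⟨fun _ _ ↦ opNorm_le_one_of_norm_sq_add_norm_sq_le_one, hN, by rw [hN]; norm_num⟩
end

section
/- Let A₁ = diag(d₁, d₂) and A₂ = diag(a, d) be diagonal 2×2 complex matrices, and let v, w ∈ ℂ. For β ∈ ℂ² with ‖β‖₂ = 1, define g(β) = 1 − |v|²·‖A₁*β‖² − |w|²·‖A₂*β‖² + |v|²|w|²·(‖A₁*β‖²·‖A₂*β‖² − |⟨A₁A₂*β, β⟩|²), where A* denotes the conjugate transpose. Then for every unit vector β ∈ ℂ², g(β) ≥ min(g(e₁), g(e₂)), where e₁ = (1,0) and e₂ = (0,1); that is, the infimum of g over the unit sphere is attained at e₁ or at e₂. -/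
/-!
Since `⟨A₁A₂*β, β⟩ = ⟨A₂*β, A₁*β⟩`, the bracket multiplying `|v|²|w|²` in `g` is a Gram
determinant, nonnegative by Cauchy–Schwarz. For diagonal `A₁, A₂` it vanishes at the basis vectors
and the rest of `g` is affine in the weights `|β_i|²`, so `g β ≥ ∑ |β_i|² g(e_i) ≥ min_i g(e_i)`.
-/

open Matrix

variable {m n : Type*} [Fintype m] [Fintype n]

theorem sum_mul_conjTranspose_mulVec_mul_conj_eq (A B : Matrix n m ℂ) (β : n → ℂ) :
    ∑ i, ((A * Bᴴ) *ᵥ β) i * starRingEnd ℂ (β i) = (Bᴴ *ᵥ β) ⬝ᵥ star (Aᴴ *ᵥ β) := by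
  change ((A * Bᴴ) *ᵥ β) ⬝ᵥ star β = _
  rw [star_mulVec, conjTranspose_conjTranspose, ← mulVec_mulVec, dotProduct_comm,
    dotProduct_mulVec, dotProduct_comm]

theorem norm_sum_mul_conjTranspose_mulVec_mul_conj_sq_le (A B : Matrix n m ℂ) (β : n → ℂ) :
    ‖∑ i, ((A * Bᴴ) *ᵥ β) i * starRingEnd ℂ (β i)‖ ^ 2 ≤
      (∑ i, ‖(Aᴴ *ᵥ β) i‖ ^ 2) * ∑ i, ‖(Bᴴ *ᵥ β) i‖ ^ 2 := by
  rw [sum_mul_conjTranspose_mulVec_mul_conj_eq, ← EuclideanSpace.inner_eq_star_dotProduct,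
    ← EuclideanSpace.norm_sq_eq (WithLp.toLp 2 _), ← EuclideanSpace.norm_sq_eq (WithLp.toLp 2 _),
    ← mul_pow]
  gcongr
  exact norm_inner_le_norm _ _

/-- The function `g = g_{(v,w)}`. -/
noncomputable def contractivityFunction (A₁ A₂ : Matrix n n ℂ) (v w : ℂ) (β : n → ℂ) : ℝ :=
  1 - ‖v‖ ^ 2 * (∑ i, ‖(A₁ᴴ *ᵥ β) i‖ ^ 2) - ‖w‖ ^ 2 * (∑ i, ‖(A₂ᴴ *ᵥ β) i‖ ^ 2)
    + ‖v‖ ^ 2 * ‖w‖ ^ 2 * ((∑ i, ‖(A₁ᴴ *ᵥ β) i‖ ^ 2) * (∑ i, ‖(A₂ᴴ *ᵥ β) i‖ ^ 2)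
      - ‖∑ i, ((A₁ * A₂ᴴ) *ᵥ β) i * starRingEnd ℂ (β i)‖ ^ 2)

theorem one_sub_le_contractivityFunction (A₁ A₂ : Matrix n n ℂ) (v w : ℂ) (β : n → ℂ) :
    1 - ‖v‖ ^ 2 * (∑ i, ‖(A₁ᴴ *ᵥ β) i‖ ^ 2) - ‖w‖ ^ 2 * (∑ i, ‖(A₂ᴴ *ᵥ β) i‖ ^ 2) ≤
      contractivityFunction A₁ A₂ v w β := by
  have := norm_sum_mul_conjTranspose_mulVec_mul_conj_sq_le A₁ A₂ β
  unfold contractivityFunction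
  nlinarith [mul_nonneg (mul_nonneg (sq_nonneg ‖v‖) (sq_nonneg ‖w‖)) (sub_nonneg.2 this)]

variable [DecidableEq n]

theorem sum_norm_sq_conjTranspose_diagonal_mulVec (p β : n → ℂ) :
    ∑ i, ‖((diagonal p)ᴴ *ᵥ β) i‖ ^ 2 = ∑ i, ‖p i‖ ^ 2 * ‖β i‖ ^ 2 := by
  simp [diagonal_conjTranspose, mulVec_diagonal, mul_pow]

theorem contractivityFunction_diagonal_single (p q : n → ℂ) (v w : ℂ) (j : n) :
    contractivityFunction (diagonal p) (diagonal q) v w (Pi.single j 1) =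
      1 - ‖v‖ ^ 2 * ‖p j‖ ^ 2 - ‖w‖ ^ 2 * ‖q j‖ ^ 2 := by
  have hsingle (f : n → ℝ) : ∑ i, f i * ‖(Pi.single j 1 : n → ℂ) i‖ ^ 2 = f j := by
    simp [Pi.single_apply, apply_ite (fun z : ℂ => ‖z‖)]
  simp only [contractivityFunction, sum_norm_sq_conjTranspose_diagonal_mulVec, hsingle]
  simp [diagonal_mul_diagonal, diagonal_conjTranspose, mulVec_diagonal, Pi.single_apply, mul_pow]

theorem sum_mul_contractivityFunction_single_le (p q : n → ℂ) (v w : ℂ) (β : n → ℂ)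
    (hβ : ∑ i, ‖β i‖ ^ 2 = 1) :
    ∑ i, ‖β i‖ ^ 2 * contractivityFunction (diagonal p) (diagonal q) v w (Pi.single i 1) ≤
      contractivityFunction (diagonal p) (diagonal q) v w β := by
  refine le_of_eq_of_le ?_ (one_sub_le_contractivityFunction _ _ v w β)
  simp only [contractivityFunction_diagonal_single, sum_norm_sq_conjTranspose_diagonal_mulVec]
  calc _ = ∑ i, (‖β i‖ ^ 2 - ‖v‖ ^ 2 * (‖p i‖ ^ 2 * ‖β i‖ ^ 2)
          - ‖w‖ ^ 2 * (‖q i‖ ^ 2 * ‖β i‖ ^ 2)) := Finset.sum_congr rfl fun i _ => by ring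
    _ = _ := by rw [Finset.sum_sub_distrib, Finset.sum_sub_distrib, hβ, Finset.mul_sum,
      Finset.mul_sum]

/-- For simultaneously diagonal `A₁ = diag(d₁,d₂)`, `A₂ = diag(a,d)` and scalars `v, w`,
the function
`g(β) = 1 − |v|²‖A₁*β‖² − |w|²‖A₂*β‖² + |v|²|w|²(‖A₁*β‖²‖A₂*β‖² − |⟨A₁A₂*β, β⟩|²)`
attains its infimum over the unit sphere of `ℂ²` at `e₁ = (1,0)` or at `e₂ = (0,1)`. -/
theorem stmt11 (d1 d2 a d v w : ℂ)
    (A1 A2 : Matrix (Fin 2) (Fin 2) ℂ)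
    (hA1 : A1 = !![d1, 0; 0, d2]) (hA2 : A2 = !![a, 0; 0, d])
    (g : (Fin 2 → ℂ) → ℝ)
    (hg : ∀ β : Fin 2 → ℂ,
      g β = 1 - ‖v‖ ^ 2 * (∑ i, ‖A1ᴴ.mulVec β i‖ ^ 2)
              - ‖w‖ ^ 2 * (∑ i, ‖A2ᴴ.mulVec β i‖ ^ 2)
              + ‖v‖ ^ 2 * ‖w‖ ^ 2 *
                ((∑ i, ‖A1ᴴ.mulVec β i‖ ^ 2) * (∑ i, ‖A2ᴴ.mulVec β i‖ ^ 2)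
                  - ‖∑ i, (A1 * A2ᴴ).mulVec β i * (starRingEnd ℂ) (β i)‖ ^ 2)) :
    ∀ β : Fin 2 → ℂ, (∑ i, ‖β i‖ ^ 2) = 1 →
      min (g ![1, 0]) (g ![0, 1]) ≤ g β := by
  intro β hβ
  have hg_eq : g = contractivityFunction (diagonal ![d1, d2]) (diagonal ![a, d]) v w := by
    funext β
    rw [hg, hA1, hA2, ← diagonal_vec2, ← diagonal_vec2]
    rfl
  have he₀ : (![1, 0] : Fin 2 → ℂ) = Pi.single 0 1 := by ext i; fin_cases i <;> rfl
  have he₁ : (![0, 1] : Fin 2 → ℂ) = Pi.single 1 1 := by ext i; fin_cases i <;> rfl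
  have hconvex := sum_mul_contractivityFunction_single_le ![d1, d2] ![a, d] v w β hβ
  rw [Fin.sum_univ_two] at hβ hconvex
  rw [hg_eq, he₀, he₁]
  exact (Convex.min_le_combo _ _ (by positivity) (by positivity) hβ).trans hconvex
end

section
/- Let α₁, α₂ ∈ ℂ, let B be an m×n complex matrix, and let T be the (m+n)×(m+n) block matrix [[α₁·I_m, B],[0, α₂·I_n]]. Then ‖T‖_op² = ((|α₂|² + ‖B‖_op² + |α₁|²) + √((|α₂|² + ‖B‖_op² − |α₁|²)² + 4‖B‖_op²·|α₁|²))/2. -/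
/-!
With `x = (x₁, x₂)`, `p = ‖x₁‖` and `q = ‖x₂‖`, one has
`‖T x‖² = ‖α₁ x₁ + B x₂‖² + |α₂|² q² ≤ (|α₁| p + ‖B‖ q)² + |α₂|² q²`, so `‖T‖` is at most the norm
of the real `2 × 2` matrix `[[|α₁|, ‖B‖], [0, |α₂|]]`. The square of that norm is the largest
eigenvalue of its Gram matrix `[[|α₁|², |α₁| ‖B‖], [|α₁| ‖B‖, ‖B‖² + |α₂|²]]`, which is the
right-hand side. The bound is attained: take `(p, q)` a nonnegative top eigenvector, `x₂ = q v`
with `v` a unit vector on which `B` attains its norm, and `x₁` of length `p` whose image `α₁ x₁`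
points in the direction of `B x₂`.
-/

open scoped Kronecker

/-- The largest eigenvalue of `[[a², ab], [ab, b² + c²]]`, i.e. the squared operator norm of the
real matrix `[[a, b], [0, c]]`. -/
noncomputable def upperTriangularNormSq (a b c : ℝ) : ℝ :=
  ((c ^ 2 + b ^ 2 + a ^ 2) + √((c ^ 2 + b ^ 2 - a ^ 2) ^ 2 + 4 * b ^ 2 * a ^ 2)) / 2

section upperTriangularNormSq

variable (a b c : ℝ)

lemma abs_sub_le_sqrt_discrim :
    |c ^ 2 + b ^ 2 - a ^ 2| ≤ √((c ^ 2 + b ^ 2 - a ^ 2) ^ 2 + 4 * b ^ 2 * a ^ 2) :=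
  Real.abs_le_sqrt (by nlinarith [sq_nonneg (a * b)])

lemma sq_le_upperTriangularNormSq : a ^ 2 ≤ upperTriangularNormSq a b c := by
  have := (abs_le.mp (abs_sub_le_sqrt_discrim a b c)).1
  unfold upperTriangularNormSq
  linarith

lemma sq_add_sq_le_upperTriangularNormSq : b ^ 2 + c ^ 2 ≤ upperTriangularNormSq a b c := by
  have := (abs_le.mp (abs_sub_le_sqrt_discrim a b c)).2
  unfold upperTriangularNormSq
  linarith

lemma upperTriangularNormSq_sub_mul_sub :
    (upperTriangularNormSq a b c - a ^ 2) * (upperTriangularNormSq a b c - (b ^ 2 + c ^ 2))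
      = a ^ 2 * b ^ 2 := by
  have h := Real.sq_sqrt (show 0 ≤ (c ^ 2 + b ^ 2 - a ^ 2) ^ 2 + 4 * b ^ 2 * a ^ 2 by positivity)
  unfold upperTriangularNormSq
  linear_combination h / 4

lemma sq_add_mul_sq_le (p q : ℝ) :
    (a * p + b * q) ^ 2 + c ^ 2 * q ^ 2 ≤ upperTriangularNormSq a b c * (p ^ 2 + q ^ 2) := by
  have h₁ := sq_le_upperTriangularNormSq a b c
  have h₂ := sq_add_sq_le_upperTriangularNormSq a b c
  have h₃ := upperTriangularNormSq_sub_mul_sub a b c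
  set L := upperTriangularNormSq a b c
  -- a binary quadratic form with nonnegative diagonal and zero determinant is nonnegative
  suffices 0 ≤ (L - a ^ 2) * p ^ 2 - 2 * (a * b) * (p * q) + (L - (b ^ 2 + c ^ 2)) * q ^ 2 by
    linarith
  rcases h₁.eq_or_lt with h | h
  · have hab : a * b = 0 := by rw [← h, sub_self, zero_mul] at h₃; nlinarith
    rw [← h, hab]
    nlinarith [mul_nonneg (sub_nonneg.2 h₂) (sq_nonneg q)]
  · nlinarith [sq_nonneg ((L - a ^ 2) * p - a * b * q)]

end upperTriangularNormSq

lemma exists_sq_add_mul_sq_eq {a b : ℝ} (ha : 0 ≤ a) (hb : 0 ≤ b) (c : ℝ) :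
    ∃ p q : ℝ, 0 ≤ p ∧ 0 ≤ q ∧ p ^ 2 + q ^ 2 ≠ 0 ∧
      (a * p + b * q) ^ 2 + c ^ 2 * q ^ 2 = upperTriangularNormSq a b c * (p ^ 2 + q ^ 2) := by
  have h₁ := sub_nonneg.2 (sq_le_upperTriangularNormSq a b c)
  have h₂ := sub_nonneg.2 (sq_add_sq_le_upperTriangularNormSq a b c)
  have h₃ := upperTriangularNormSq_sub_mul_sub a b c
  set L := upperTriangularNormSq a b c
  -- `(√(L - b² - c²), √(L - a²))` is an eigenvector of `[[a², ab], [ab, b² + c²]]` for `L`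
  set s := √(L - (b ^ 2 + c ^ 2))
  set t := √(L - a ^ 2)
  have hs : s ^ 2 = L - (b ^ 2 + c ^ 2) := Real.sq_sqrt h₂
  have ht : t ^ 2 = L - a ^ 2 := Real.sq_sqrt h₁
  have hst : s * t = a * b := by
    rw [← Real.sqrt_mul h₂, mul_comm, h₃, ← mul_pow, Real.sqrt_sq (mul_nonneg ha hb)]
  by_cases h : s ^ 2 + t ^ 2 = 0
  · refine ⟨1, 0, zero_le_one, le_rfl, by norm_num, ?_⟩
    nlinarith [sq_nonneg s, sq_nonneg t]
  · refine ⟨s, t, Real.sqrt_nonneg _, Real.sqrt_nonneg _, h, ?_⟩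
    linear_combination s ^ 2 * ht + t ^ 2 * hs - 2 * s * t * hst

section RCLike

variable {𝕜 E F : Type*} [RCLike 𝕜] [NormedAddCommGroup E] [NormedSpace 𝕜 E]
  [NormedAddCommGroup F] [NormedSpace 𝕜 F]

lemma exists_norm_eq_one_eq_norm_smul [Nontrivial E] (y : E) :
    ∃ u : E, ‖u‖ = 1 ∧ y = (‖y‖ : 𝕜) • u := by
  rcases eq_or_ne y 0 with rfl | hy
  · obtain ⟨x, hx⟩ := exists_ne (0 : E)
    exact ⟨_, norm_smul_inv_norm (𝕜 := 𝕜) hx, by simp⟩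
  · refine ⟨_, norm_smul_inv_norm (𝕜 := 𝕜) hy, (smul_inv_smul₀ ?_ y).symm⟩
    exact RCLike.ofReal_ne_zero.2 (norm_ne_zero_iff.2 hy)

lemma RCLike.exists_norm_eq_one_mul_eq_norm (z : 𝕜) : ∃ ζ : 𝕜, ‖ζ‖ = 1 ∧ z * ζ = ‖z‖ := by
  obtain ⟨u, hu, hz⟩ := exists_norm_eq_one_eq_norm_smul (𝕜 := 𝕜) z
  refine ⟨starRingEnd 𝕜 u, by rwa [RCLike.norm_conj], ?_⟩
  conv_lhs => rw [hz]
  rw [smul_eq_mul, mul_assoc, RCLike.mul_conj, hu, RCLike.ofReal_one, one_pow, mul_one]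

lemma exists_norm_eq_and_norm_smul_add_eq [Nontrivial E] (α : 𝕜) (y : E) {p : ℝ} (hp : 0 ≤ p) :
    ∃ x : E, ‖x‖ = p ∧ ‖α • x + y‖ = ‖α‖ * p + ‖y‖ := by
  obtain ⟨ζ, hζ, hαζ⟩ := RCLike.exists_norm_eq_one_mul_eq_norm α
  obtain ⟨u, hu, hy⟩ := exists_norm_eq_one_eq_norm_smul (𝕜 := 𝕜) y
  refine ⟨((p : 𝕜) * ζ) • u, by simp [norm_smul, hζ, hu, hp], ?_⟩
  set r := ‖y‖
  rw [hy, smul_smul, ← add_smul, mul_left_comm, hαζ, ← RCLike.ofReal_mul, ← RCLike.ofReal_add,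
    norm_smul, hu, mul_one, RCLike.norm_of_nonneg (by positivity)]
  ring

namespace ContinuousLinearMap

lemma exists_norm_eq_one_norm_apply_eq_opNorm [FiniteDimensional 𝕜 E] [Nontrivial E]
    (f : E →L[𝕜] F) : ∃ x, ‖x‖ = 1 ∧ ‖f x‖ = ‖f‖ := by
  have := FiniteDimensional.proper_rclike 𝕜 E
  obtain ⟨u, hu, -⟩ := exists_norm_eq_one_eq_norm_smul (𝕜 := 𝕜) (0 : E)
  have hK := (isCompact_sphere (0 : E) 1).image f.continuous.norm
  obtain ⟨x, hx, hfx⟩ := hK.sSup_mem (Set.Nonempty.image _ ⟨u, mem_sphere_zero_iff_norm.2 hu⟩)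
  rw [f.sSup_sphere_eq_norm] at hfx
  exact ⟨x, mem_sphere_zero_iff_norm.1 hx, hfx⟩

lemma opNorm_sq_eq_of_le_of_eq {f : E →L[𝕜] F} {L : ℝ} (hle : ∀ x, ‖f x‖ ^ 2 ≤ L * ‖x‖ ^ 2)
    {x₀ : E} (hx₀ : x₀ ≠ 0) (heq : ‖f x₀‖ ^ 2 = L * ‖x₀‖ ^ 2) : ‖f‖ ^ 2 = L := by
  have hx₀ : 0 < ‖x₀‖ ^ 2 := by positivity
  have hL : 0 ≤ L := nonneg_of_mul_nonneg_left (heq ▸ sq_nonneg _) hx₀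
  refine le_antisymm ((Real.le_sqrt (norm_nonneg _) hL).1 ?_) (le_of_mul_le_mul_right ?_ hx₀)
  · refine f.opNorm_le_bound (Real.sqrt_nonneg L) fun x => ?_
    rw [← Real.sqrt_sq (norm_nonneg x), ← Real.sqrt_mul hL,
      Real.le_sqrt (norm_nonneg _) (by positivity)]
    exact hle x
  · rw [← heq, ← mul_pow]
    exact pow_le_pow_left₀ (norm_nonneg _) (f.le_opNorm x₀) 2

end ContinuousLinearMap

end RCLike

namespace EuclideanSpace

variable {𝕜 ι κ : Type*}

def sumElim (x : EuclideanSpace 𝕜 ι) (y : EuclideanSpace 𝕜 κ) : EuclideanSpace 𝕜 (ι ⊕ κ) :=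
  WithLp.toLp 2 (Sum.elim x y)

lemma exists_eq_sumElim (z : EuclideanSpace 𝕜 (ι ⊕ κ)) : ∃ x y, z = sumElim x y :=
  ⟨WithLp.toLp 2 (z ∘ Sum.inl), WithLp.toLp 2 (z ∘ Sum.inr), by ext (i | j) <;> rfl⟩

variable [RCLike 𝕜] [Fintype ι] [Fintype κ]

lemma norm_sq_sumElim (x : EuclideanSpace 𝕜 ι) (y : EuclideanSpace 𝕜 κ) :
    ‖sumElim x y‖ ^ 2 = ‖x‖ ^ 2 + ‖y‖ ^ 2 := by
  simp only [norm_sq_eq, sumElim, Fintype.sum_sum_type, Sum.elim_inl, Sum.elim_inr]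

lemma toEuclideanLin_fromBlocks_sumElim [DecidableEq ι] [DecidableEq κ] (A : Matrix ι ι 𝕜)
    (B : Matrix ι κ 𝕜) (C : Matrix κ ι 𝕜) (D : Matrix κ κ 𝕜) (x : EuclideanSpace 𝕜 ι)
    (y : EuclideanSpace 𝕜 κ) :
    (Matrix.fromBlocks A B C D).toEuclideanLin (sumElim x y)
      = sumElim (A.toEuclideanLin x + B.toEuclideanLin y)
          (C.toEuclideanLin x + D.toEuclideanLin y) := by
  ext (i | j) <;> simp [sumElim, Matrix.toLpLin_apply, Matrix.fromBlocks_mulVec]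

end EuclideanSpace

open EuclideanSpace in
theorem opNorm_fromBlocks_smul_one_sq {ι κ : Type*} [Fintype ι] [Fintype κ] [DecidableEq ι]
    [DecidableEq κ] [Nonempty ι] [Nonempty κ] (α₁ α₂ : ℂ) (B : Matrix ι κ ℂ) :
    opNorm (Matrix.fromBlocks (α₁ • (1 : Matrix ι ι ℂ)) B 0 (α₂ • (1 : Matrix κ κ ℂ))) ^ 2
      = upperTriangularNormSq ‖α₁‖ (opNorm B) ‖α₂‖ := by
  set T := Matrix.fromBlocks (α₁ • (1 : Matrix ι ι ℂ)) B 0 (α₂ • (1 : Matrix κ κ ℂ))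
  set g := LinearMap.toContinuousLinearMap (Matrix.toEuclideanLin B)
  have hT (x : EuclideanSpace ℂ ι) (y : EuclideanSpace ℂ κ) :
      ‖T.toEuclideanLin (sumElim x y)‖ ^ 2 = ‖α₁ • x + g y‖ ^ 2 + ‖α₂‖ ^ 2 * ‖y‖ ^ 2 := by
    simp [T, toEuclideanLin_fromBlocks_sumElim, norm_sq_sumElim, norm_smul, mul_pow, g]
  obtain ⟨v, hv, hgv⟩ := g.exists_norm_eq_one_norm_apply_eq_opNorm
  obtain ⟨p, q, hp, hq, hpq, hpq_eq⟩ :=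
    exists_sq_add_mul_sq_eq (norm_nonneg α₁) (norm_nonneg g) ‖α₂‖
  obtain ⟨x, hx, hxy⟩ := exists_norm_eq_and_norm_smul_add_eq α₁ (g ((q : ℂ) • v)) hp
  have hy : ‖(q : ℂ) • v‖ = q := by simp [norm_smul, hv, hq]
  refine ContinuousLinearMap.opNorm_sq_eq_of_le_of_eq (fun z => ?_)
    (x₀ := sumElim x ((q : ℂ) • v)) ?_ ?_
  · obtain ⟨z₁, z₂, rfl⟩ := exists_eq_sumElim z
    have : ‖α₁ • z₁ + g z₂‖ ≤ ‖α₁‖ * ‖z₁‖ + opNorm B * ‖z₂‖ :=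
      (norm_add_le _ _).trans (by rw [norm_smul]; exact add_le_add le_rfl (g.le_opNorm z₂))
    calc _ = ‖α₁ • z₁ + g z₂‖ ^ 2 + ‖α₂‖ ^ 2 * ‖z₂‖ ^ 2 := hT z₁ z₂
      _ ≤ (‖α₁‖ * ‖z₁‖ + opNorm B * ‖z₂‖) ^ 2 + ‖α₂‖ ^ 2 * ‖z₂‖ ^ 2 := by gcongr
      _ ≤ _ := by rw [norm_sq_sumElim]; exact sq_add_mul_sq_le _ _ _ _ _
  · rw [← norm_ne_zero_iff, ← pow_ne_zero_iff two_ne_zero, norm_sq_sumElim, hx, hy]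
    exact hpq
  · change ‖T.toEuclideanLin _‖ ^ 2 = _
    rw [hT, hxy, norm_sq_sumElim, hx, hy, map_smul, norm_smul, hgv, Complex.norm_real,
      Real.norm_of_nonneg hq, mul_comm q]
    exact hpq_eq

/-- The operator norm of the block matrix `[[α₁ I_m, B],[0, α₂ I_n]]`:
`‖T‖² = ((|α₂|² + ‖B‖² + |α₁|²) + √((|α₂|² + ‖B‖² − |α₁|²)² + 4‖B‖²|α₁|²))/2`. -/
theorem stmt12 {m n : ℕ} (hm : 0 < m) (hn : 0 < n)
    (α₁ α₂ : ℂ) (B : Matrix (Fin m) (Fin n) ℂ) :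
    opNorm (Matrix.fromBlocks (α₁ • (1 : Matrix (Fin m) (Fin m) ℂ)) B
        0 (α₂ • (1 : Matrix (Fin n) (Fin n) ℂ))) ^ 2
      = ((‖α₂‖ ^ 2 + opNorm B ^ 2 + ‖α₁‖ ^ 2)
          + Real.sqrt ((‖α₂‖ ^ 2 + opNorm B ^ 2 - ‖α₁‖ ^ 2) ^ 2
              + 4 * opNorm B ^ 2 * ‖α₁‖ ^ 2)) / 2 := by
  have := Fin.pos_iff_nonempty.1 hm
  have := Fin.pos_iff_nonempty.1 hn
  exact opNorm_fromBlocks_smul_one_sq α₁ α₂ B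
end

section
/- Let α₁, α₂ ∈ ℂ, let B be an m×n complex matrix, and let T be the block matrix [[α₁·I_m, B],[0, α₂·I_n]]. Then ‖T‖_op ≤ 1 if and only if |α₁| ≤ 1, |α₂| ≤ 1, and ‖B‖_op² ≤ (1 − |α₁|²)(1 − |α₂|²). -/
/-!
`T` is a contraction iff `‖α₁ x + B y‖² + |α₂|² ‖y‖² ≤ ‖x‖² + ‖y‖²` for all `x, y`.
Sufficiency: by the triangle inequality it is enough to have
`(|α₁| X + ‖B‖ Y)² + |α₂|² Y² ≤ X² + Y²` for real `X, Y`, a Cauchy–Schwarz estimate.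
Necessity: for `x` a real multiple `t` of `conj α₁ • B y` the triangle inequality is an equality,
and optimising over `t` gives `‖B y‖² ≤ (1 - |α₁|²)(1 - |α₂|²) ‖y‖²`.
-/

open scoped Kronecker

lemma mul_add_mul_sq_add_sq_le {a d s X Y : ℝ} (ha : a ^ 2 ≤ 1) (hd : d ^ 2 ≤ 1)
    (hs : s ^ 2 ≤ (1 - a ^ 2) * (1 - d ^ 2)) :
    (a * X + s * Y) ^ 2 + d ^ 2 * Y ^ 2 ≤ X ^ 2 + Y ^ 2 := by
  rcases ha.eq_or_lt with ha | ha
  · have hs0 : s ^ 2 = 0 := le_antisymm (by simpa [ha] using hs) (sq_nonneg s)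
    obtain rfl : s = 0 := pow_eq_zero_iff two_ne_zero |>.1 hs0
    nlinarith
  · have hu : 0 < 1 - a ^ 2 := sub_pos.2 ha
    have key : (1 - a ^ 2) * (X ^ 2 + Y ^ 2 - ((a * X + s * Y) ^ 2 + d ^ 2 * Y ^ 2)) =
        ((1 - a ^ 2) * X - a * s * Y) ^ 2 + Y ^ 2 * ((1 - a ^ 2) * (1 - d ^ 2) - s ^ 2) := by ring
    have : 0 ≤ (1 - a ^ 2) * (X ^ 2 + Y ^ 2 - ((a * X + s * Y) ^ 2 + d ^ 2 * Y ^ 2)) :=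
      key ▸ add_nonneg (sq_nonneg _) (mul_nonneg (sq_nonneg _) (sub_nonneg.2 hs))
    exact sub_nonneg.1 (nonneg_of_mul_nonneg_right (by linarith) hu)

lemma sq_le_of_forall_quadratic_le {a d s Y : ℝ} (ha : a ^ 2 ≤ 1)
    (h : ∀ t : ℝ, ((t * a ^ 2 + 1) * s) ^ 2 + d ^ 2 * Y ^ 2 ≤ (t * a * s) ^ 2 + Y ^ 2) :
    s ^ 2 ≤ (1 - a ^ 2) * (1 - d ^ 2) * Y ^ 2 := by
  rcases ha.eq_or_lt with ha | ha
  · -- for `a ^ 2 = 1` the hypothesis reads `(2 t + 1) s ^ 2 ≤ (1 - d ^ 2) Y ^ 2` for all `t`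
    rcases eq_or_ne s 0 with rfl | hs
    · nlinarith [h 0]
    · have := h (Y ^ 2 / s ^ 2)
      have : Y ^ 2 / s ^ 2 * s ^ 2 = Y ^ 2 := div_mul_cancel₀ _ (pow_ne_zero 2 hs)
      nlinarith [sq_nonneg (d * Y), sq_pos_of_ne_zero hs]
  · set u := 1 - a ^ 2
    have hu : 0 < u := by linarith
    have htu : u⁻¹ * a ^ 2 + 1 = u⁻¹ := by field_simp; ring
    have h₁ := h u⁻¹
    rw [htu] at h₁
    have h₂ : u⁻¹ * s ^ 2 ≤ (1 - d ^ 2) * Y ^ 2 := by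
      have : u⁻¹ ^ 2 * u = u⁻¹ := by field_simp
      nlinarith
    calc s ^ 2 = u * (u⁻¹ * s ^ 2) := by field_simp
      _ ≤ u * ((1 - d ^ 2) * Y ^ 2) := by gcongr
      _ = _ := by ring

open Matrix WithLp

section OpNorm

variable {m n : Type*} [Fintype m] [Fintype n] [DecidableEq n]

lemma opNorm_nonneg (M : Matrix m n ℂ) : 0 ≤ opNorm M := norm_nonneg _

lemma norm_toEuclideanLin_le (M : Matrix m n ℂ) (v : EuclideanSpace ℂ n) :
    ‖toEuclideanLin M v‖ ≤ opNorm M * ‖v‖ :=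
  (LinearMap.toContinuousLinearMap (toEuclideanLin M)).le_opNorm v

lemma opNorm_sq_le_iff (M : Matrix m n ℂ) {K : ℝ} (hK : 0 ≤ K) :
    opNorm M ^ 2 ≤ K ↔ ∀ v, ‖toEuclideanLin M v‖ ^ 2 ≤ K * ‖v‖ ^ 2 := by
  rw [← Real.le_sqrt (opNorm_nonneg M) hK, opNorm,
    ContinuousLinearMap.opNorm_le_iff (Real.sqrt_nonneg K)]
  refine forall_congr' fun v => ?_
  rw [← Real.sqrt_sq (norm_nonneg v), ← Real.sqrt_mul hK,
    Real.le_sqrt (norm_nonneg _) (by positivity), Real.sqrt_sq (norm_nonneg v)]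
  rfl

end OpNorm

section Blocks

variable {l m n o : Type*} [Fintype l] [Fintype m] [Fintype n] [Fintype o]
  [DecidableEq l] [DecidableEq m]

lemma toEuclideanLin_fromBlocks_symm_apply {𝕜 : Type*} [RCLike 𝕜] (A : Matrix n l 𝕜)
    (B : Matrix n m 𝕜) (C : Matrix o l 𝕜) (D : Matrix o m 𝕜) (x : EuclideanSpace 𝕜 l) (y : EuclideanSpace 𝕜 m) :
    toEuclideanLin (fromBlocks A B C D)
        ((PiLp.sumPiLpEquivProdLpPiLp (𝕜 := 𝕜) 2 (fun _ => 𝕜)).symm (toLp 2 (x, y))) =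
      (PiLp.sumPiLpEquivProdLpPiLp (𝕜 := 𝕜) 2 (fun _ => 𝕜)).symm
        (toLp 2 (toEuclideanLin A x + toEuclideanLin B y,
          toEuclideanLin C x + toEuclideanLin D y)) := by
  ext (i | i) <;> simp [toLpLin_apply, fromBlocks_mulVec] <;> rfl

lemma opNorm_fromBlocks_sq_le_iff (A : Matrix n l ℂ) (B : Matrix n m ℂ) (C : Matrix o l ℂ)
    (D : Matrix o m ℂ) {K : ℝ} (hK : 0 ≤ K) :
    opNorm (fromBlocks A B C D) ^ 2 ≤ K ↔ ∀ x y,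
      ‖toEuclideanLin A x + toEuclideanLin B y‖ ^ 2 +
        ‖toEuclideanLin C x + toEuclideanLin D y‖ ^ 2 ≤ K * (‖x‖ ^ 2 + ‖y‖ ^ 2) := by
  have hsurj := (PiLp.sumPiLpEquivProdLpPiLp (𝕜 := ℂ) 2 (fun _ : l ⊕ m => ℂ)).symm.surjective.comp
    (toLp_surjective 2)
  rw [opNorm_sq_le_iff _ hK, hsurj.forall, Prod.forall]
  refine forall₂_congr fun x y => ?_
  rw [Function.comp_apply, toEuclideanLin_fromBlocks_symm_apply, LinearIsometryEquiv.norm_map,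
    LinearIsometryEquiv.norm_map, WithLp.prod_norm_sq_eq_of_L2, WithLp.prod_norm_sq_eq_of_L2]
  rfl

end Blocks

section UpperTriangular

variable {m n : Type*} [Fintype m] [Fintype n] [DecidableEq n]

def BlockContractive (α₁ α₂ : ℂ) (B : Matrix m n ℂ) : Prop :=
  ∀ x y, ‖α₁ • x + toEuclideanLin B y‖ ^ 2 + ‖α₂‖ ^ 2 * ‖y‖ ^ 2 ≤ ‖x‖ ^ 2 + ‖y‖ ^ 2

lemma opNorm_fromBlocks_smul_one_le_one_iff [DecidableEq m] (α₁ α₂ : ℂ) (B : Matrix m n ℂ) :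
    opNorm (fromBlocks (α₁ • (1 : Matrix m m ℂ)) B 0 (α₂ • (1 : Matrix n n ℂ))) ≤ 1 ↔
      BlockContractive α₁ α₂ B := by
  rw [← sq_le_one_iff₀ (opNorm_nonneg _), opNorm_fromBlocks_sq_le_iff _ _ _ _ zero_le_one]
  simp [BlockContractive, norm_smul, mul_pow]

namespace BlockContractive

variable {α₁ α₂ : ℂ} {B : Matrix m n ℂ}

lemma norm_left_le_one [DecidableEq m] [Nonempty m] (h : BlockContractive α₁ α₂ B) : ‖α₁‖ ≤ 1 := by
  simpa [norm_smul] using h (EuclideanSpace.single (Classical.arbitrary m) 1) 0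

lemma norm_right_le_one [Nonempty n] (h : BlockContractive α₁ α₂ B) : ‖α₂‖ ≤ 1 := by
  have := h 0 (EuclideanSpace.single (Classical.arbitrary n) 1)
  simp at this
  exact (sq_le_one_iff₀ (norm_nonneg _)).1 (le_of_add_le_of_nonneg_right this (sq_nonneg _))

lemma norm_toEuclideanLin_sq_le (h : BlockContractive α₁ α₂ B) (ha : ‖α₁‖ ≤ 1)
    (y : EuclideanSpace ℂ n) :
    ‖toEuclideanLin B y‖ ^ 2 ≤ (1 - ‖α₁‖ ^ 2) * (1 - ‖α₂‖ ^ 2) * ‖y‖ ^ 2 := by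
  set v := toEuclideanLin B y
  refine sq_le_of_forall_quadratic_le (pow_le_one₀ (norm_nonneg _) ha) fun t => ?_
  -- aligning `α₁ • x` with `v` turns the triangle inequality into an equality
  have hx : α₁ • (((t : ℂ) * starRingEnd ℂ α₁) • v) + v = ((t * ‖α₁‖ ^ 2 + 1 : ℝ) : ℂ) • v := by
    rw [smul_smul, mul_left_comm, RCLike.mul_conj]
    push_cast
    module
  have := h (((t : ℂ) * starRingEnd ℂ α₁) • v) y
  rw [hx] at this
  simpa only [norm_smul, norm_mul, Complex.norm_real, Real.norm_eq_abs, RCLike.norm_conj, mul_pow,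
    sq_abs] using this

lemma opNorm_sq_le (h : BlockContractive α₁ α₂ B) (ha : ‖α₁‖ ≤ 1) (hd : ‖α₂‖ ≤ 1) :
    opNorm B ^ 2 ≤ (1 - ‖α₁‖ ^ 2) * (1 - ‖α₂‖ ^ 2) := by
  have hK : 0 ≤ (1 - ‖α₁‖ ^ 2) * (1 - ‖α₂‖ ^ 2) :=
    mul_nonneg (sub_nonneg.2 (pow_le_one₀ (norm_nonneg _) ha))
      (sub_nonneg.2 (pow_le_one₀ (norm_nonneg _) hd))
  exact (opNorm_sq_le_iff B hK).2 (h.norm_toEuclideanLin_sq_le ha)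

end BlockContractive

lemma blockContractive_of_opNorm_sq_le {α₁ α₂ : ℂ} {B : Matrix m n ℂ} (ha : ‖α₁‖ ≤ 1)
    (hd : ‖α₂‖ ≤ 1) (hB : opNorm B ^ 2 ≤ (1 - ‖α₁‖ ^ 2) * (1 - ‖α₂‖ ^ 2)) : BlockContractive α₁ α₂ B := by
  intro x y
  have htri : ‖α₁ • x + toEuclideanLin B y‖ ≤ ‖α₁‖ * ‖x‖ + opNorm B * ‖y‖ :=
    (norm_add_le _ _).trans (by rw [norm_smul]; gcongr; exact norm_toEuclideanLin_le B y)
  calc ‖α₁ • x + toEuclideanLin B y‖ ^ 2 + ‖α₂‖ ^ 2 * ‖y‖ ^ 2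
      ≤ (‖α₁‖ * ‖x‖ + opNorm B * ‖y‖) ^ 2 + ‖α₂‖ ^ 2 * ‖y‖ ^ 2 := by gcongr
    _ ≤ ‖x‖ ^ 2 + ‖y‖ ^ 2 :=
      mul_add_mul_sq_add_sq_le (pow_le_one₀ (norm_nonneg _) ha) (pow_le_one₀ (norm_nonneg _) hd) hB

end UpperTriangular

/-- The block matrix `[[α₁ I_m, B],[0, α₂ I_n]]` is a contraction iff `|α₁| ≤ 1`,
`|α₂| ≤ 1` and `‖B‖² ≤ (1 − |α₁|²)(1 − |α₂|²)`. -/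
theorem stmt13 {m n : ℕ} (hm : 0 < m) (hn : 0 < n)
    (α₁ α₂ : ℂ) (B : Matrix (Fin m) (Fin n) ℂ) :
    opNorm (Matrix.fromBlocks (α₁ • (1 : Matrix (Fin m) (Fin m) ℂ)) B
        0 (α₂ • (1 : Matrix (Fin n) (Fin n) ℂ))) ≤ 1
      ↔ ‖α₁‖ ≤ 1 ∧ ‖α₂‖ ≤ 1 ∧
          opNorm B ^ 2 ≤ (1 - ‖α₁‖ ^ 2) * (1 - ‖α₂‖ ^ 2) := by
  have : Nonempty (Fin m) := Fin.pos_iff_nonempty.1 hm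
  have : Nonempty (Fin n) := Fin.pos_iff_nonempty.1 hn
  rw [opNorm_fromBlocks_smul_one_le_one_iff]
  refine ⟨fun h => ?_, fun ⟨ha, hd, hB⟩ => blockContractive_of_opNorm_sq_le ha hd hB⟩
  have ha := h.norm_left_le_one
  have hd := h.norm_right_le_one
  exact ⟨ha, hd, h.opNorm_sq_le ha hd⟩
end

section
/- Let b ≥ 0 be real, c, d₂ ∈ ℂ, and let v₁ = (v₁₁, v₁₂), v₂ = (v₂₁, v₂₂) ∈ ℂ² be linearly independent. Set V₁ = [[v₁₁, v₁₂],[0, 0]], V₂ = [[v₂₁, v₂₂],[0, 0]], V₃ = V₁ + V₂ (2×2 matrices). Then the operator norms of the 4×4 block matrices M = [[V₃, b·V₂],[c·V₂, d₂·V₁]] and M′ = [[V₃, c·V₂],[b·V₂, d₂·V₁]] are equal if and only if |d₂| = 1 or b = |c|. (Here M = P_A^{(2)}(V) and M′ = P_{Aᵗ}^{(2)}(V) for A₁ = [[1,0],[0,d₂]], A₂ = [[1,b],[c,0]].) -/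
/-!
Both block matrices have only two nonzero rows `r, s`, so their operator norm is `√λ`, where `λ`
is the larger eigenvalue of the Gram matrix `[[‖r‖², ⟪r, s⟫], [⟪s, r⟫, ‖s‖²]]`. The entries of `M`
and `M′` agree up to position, so the two Gram matrices have the same trace, and the norms agree
iff the Gram determinants `‖r‖²‖s‖² - |⟪r, s⟫|²` agree. Their difference factors as
`(b² - |c|²)(|d₂|² - 1)|det(v₁, v₂)|²`, and `det(v₁, v₂) ≠ 0` by linear independence.
-/

open scoped Kronecker

open scoped ComplexConjugate Matrix Matrix.Norms.L2Operator
open Complex Matrix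

/-- The larger eigenvalue of the Hermitian matrix `[[α, β], [conj β, γ]]`. -/
noncomputable def topEigenvalue (α γ : ℝ) (β : ℂ) : ℝ :=
  (α + γ + √((α - γ) ^ 2 + 4 * normSq β)) / 2

/-- The Hermitian form `⟪z, G z⟫` of `G = [[α, β], [conj β, γ]]`. -/
noncomputable def gramForm (α γ : ℝ) (β : ℂ) (z : EuclideanSpace ℂ (Fin 2)) : ℝ :=
  α * normSq (z 0) + γ * normSq (z 1) + 2 * (conj β * z 0 * conj (z 1)).re

section topEigenvalue

variable (α γ : ℝ) (β : ℂ)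

lemma discriminant_nonneg : 0 ≤ (α - γ) ^ 2 + 4 * normSq β := by
  have := normSq_nonneg β
  positivity

lemma abs_sub_le_sqrt_discriminant : |α - γ| ≤ √((α - γ) ^ 2 + 4 * normSq β) :=
  Real.abs_le_sqrt (le_add_of_nonneg_right (mul_nonneg zero_le_four (normSq_nonneg β)))

lemma left_le_topEigenvalue : α ≤ topEigenvalue α γ β := by
  have := abs_sub_le_sqrt_discriminant α γ β
  unfold topEigenvalue
  linarith [le_abs_self (α - γ)]

lemma right_le_topEigenvalue : γ ≤ topEigenvalue α γ β := by
  have := abs_sub_le_sqrt_discriminant α γ β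
  unfold topEigenvalue
  linarith [neg_abs_le (α - γ)]

lemma topEigenvalue_sub_mul_sub :
    (topEigenvalue α γ β - α) * (topEigenvalue α γ β - γ) = normSq β := by
  have := Real.sq_sqrt (discriminant_nonneg α γ β)
  unfold topEigenvalue
  linear_combination this / 4

lemma gramForm_le (z : EuclideanSpace ℂ (Fin 2)) :
    gramForm α γ β z ≤ topEigenvalue α γ β * ‖z‖ ^ 2 := by
  set μ := topEigenvalue α γ β
  have hα : 0 ≤ μ - α := sub_nonneg.2 (left_le_topEigenvalue α γ β)
  have hγ : 0 ≤ μ - γ := sub_nonneg.2 (right_le_topEigenvalue α γ β)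
  have hβ : ‖β‖ = √(μ - α) * √(μ - γ) := by
    rw [← Real.sqrt_mul hα, topEigenvalue_sub_mul_sub, Complex.norm_def]
  have hcross : (conj β * z 0 * conj (z 1)).re ≤ √(μ - α) * √(μ - γ) * ‖z 0‖ * ‖z 1‖ :=
    hβ ▸ (re_le_norm _).trans (by simp)
  have hamgm := two_mul_le_add_sq (√(μ - α) * ‖z 0‖) (√(μ - γ) * ‖z 1‖)
  rw [mul_pow, mul_pow, Real.sq_sqrt hα, Real.sq_sqrt hγ] at hamgm
  rw [gramForm, EuclideanSpace.norm_sq_eq, Fin.sum_univ_two]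
  simp only [← Complex.sq_norm]
  beta_reduce at hcross
  linarith

lemma exists_gramForm_eq :
    ∃ z : EuclideanSpace ℂ (Fin 2), z ≠ 0 ∧ gramForm α γ β z = topEigenvalue α γ β * ‖z‖ ^ 2 := by
  have hprod := topEigenvalue_sub_mul_sub α γ β
  set μ := topEigenvalue α γ β
  by_cases hμ : μ = α
  · refine ⟨!₂[1, 0], fun h => by simpa using congr($h 0), ?_⟩
    simp [gramForm, EuclideanSpace.norm_sq_eq, hμ]
  · refine ⟨!₂[β, ((μ - α : ℝ) : ℂ)], fun h => hμ ?_, ?_⟩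
    · have : (μ : ℂ) - α = 0 := by simpa using congr($h 1)
      exact_mod_cast sub_eq_zero.1 this
    · simp only [gramForm, EuclideanSpace.norm_sq_eq, Fin.sum_univ_two, ← normSq_eq_norm_sq,
        Matrix.cons_val_zero, Matrix.cons_val_one, conj_ofReal, normSq_ofReal]
      rw [← mul_assoc, ← normSq_eq_conj_mul_self, ← ofReal_mul, ofReal_re]
      linear_combination (α - μ) * hprod

lemma topEigenvalue_nonneg (hα : 0 ≤ α) : 0 ≤ topEigenvalue α γ β :=
  hα.trans (left_le_topEigenvalue α γ β)

-- With the trace `α + γ` fixed, the larger eigenvalue is a decreasing function of the determinant.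
lemma topEigenvalue_eq_iff {α' γ' : ℝ} {β' : ℂ} (h : α + γ = α' + γ') :
    topEigenvalue α γ β = topEigenvalue α' γ' β' ↔
      α * γ - normSq β = α' * γ' - normSq β' := by
  have hsqrt := Real.sqrt_inj (discriminant_nonneg α γ β) (discriminant_nonneg α' γ' β')
  unfold topEigenvalue
  constructor
  · intro he
    linear_combination ((α + γ + α' + γ') * h - hsqrt.mp (by linarith)) / 4
  · intro hd
    rw [hsqrt.mpr (by linear_combination (α + γ + α' + γ') * h - 4 * hd)]
    linarith

end topEigenvalue

noncomputable def gramDet {n : Type*} [Fintype n] (r s : n → ℂ) : ℝ :=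
  (∑ j, normSq (r j)) * (∑ j, normSq (s j)) - normSq (∑ j, r j * conj (s j))

section opNorm

variable {m n : Type*} [Fintype m] [Fintype n] [DecidableEq n]

-- `opNorm` is definitionally Mathlib's L² operator norm on matrices.
lemma opNorm_conjTranspose [DecidableEq m] (M : Matrix m n ℂ) : opNorm Mᴴ = opNorm M :=
  l2_opNorm_conjTranspose M

lemma opNorm_submatrix_of_eq_zero {ι : Type*} [Fintype ι] (M : Matrix m n ℂ) {e : ι → m}
    (he : e.Injective) (hM : ∀ i ∉ Set.range e, M i = 0) :
    opNorm (M.submatrix e id) = opNorm M := by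
  refine ContinuousLinearMap.opNorm_ext _ _ fun x => ?_
  rw [← sq_eq_sq₀ (norm_nonneg _) (norm_nonneg _), EuclideanSpace.norm_sq_eq,
    EuclideanSpace.norm_sq_eq]
  refine Fintype.sum_of_injective e he _ _ (fun i hi => ?_) fun i => rfl
  simp [toLpLin_apply, mulVec, hM i hi]

lemma opNorm_eq_sqrt (M : Matrix m n ℂ) {μ : ℝ}
    (hle : ∀ x, ‖toEuclideanLin M x‖ ^ 2 ≤ μ * ‖x‖ ^ 2)
    (heq : ∃ x ≠ 0, ‖toEuclideanLin M x‖ ^ 2 = μ * ‖x‖ ^ 2) :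
    opNorm M = √μ := by
  obtain ⟨x₀, hx₀, hMx₀⟩ := heq
  have hx₀pos : 0 < ‖x₀‖ := norm_pos_iff.2 hx₀
  have hμ : 0 ≤ μ := by
    by_contra! h
    nlinarith [sq_nonneg ‖toEuclideanLin M x₀‖, pow_pos hx₀pos 2]
  have hsqrt : ∀ x : EuclideanSpace ℂ n, √(μ * ‖x‖ ^ 2) = √μ * ‖x‖ := fun x => by
    rw [Real.sqrt_mul hμ, Real.sqrt_sq (norm_nonneg x)]
  refine ContinuousLinearMap.opNorm_eq_of_bounds (Real.sqrt_nonneg μ) (fun x => ?_)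
    fun N _ hN => ?_
  · rw [← hsqrt]
    exact Real.le_sqrt_of_sq_le (hle x)
  · have := hN x₀
    rw [LinearMap.coe_toContinuousLinearMap', ← Real.sqrt_sq (norm_nonneg (toEuclideanLin M x₀)),
      hMx₀, hsqrt] at this
    exact le_of_mul_le_mul_right this hx₀pos

omit [Fintype m] [DecidableEq n] in
lemma norm_toEuclideanLin_conjTranspose_sq (W : Matrix (Fin 2) n ℂ)
    (z : EuclideanSpace ℂ (Fin 2)) :
    ‖toEuclideanLin Wᴴ z‖ ^ 2 = gramForm (∑ j, normSq (W 0 j)) (∑ j, normSq (W 1 j))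
      (∑ j, W 0 j * conj (W 1 j)) z := by
  calc ‖toEuclideanLin Wᴴ z‖ ^ 2 = ∑ j, normSq (conj (W 0 j) * z 0 + conj (W 1 j) * z 1) := by
        simp [EuclideanSpace.norm_sq_eq, toLpLin_apply, mulVec, dotProduct, Fin.sum_univ_two,
          normSq_eq_norm_sq]
    _ = ∑ j, (normSq (W 0 j) * normSq (z 0) + normSq (W 1 j) * normSq (z 1)
          + 2 * (conj (W 0 j * conj (W 1 j)) * z 0 * conj (z 1)).re) := by
        refine Finset.sum_congr rfl fun j _ => ?_
        rw [normSq_add]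
        simp only [normSq_conj, map_mul, conj_conj]
        ring_nf
    _ = _ := by
        simp only [gramForm, map_sum, re_sum, Finset.sum_add_distrib, Finset.sum_mul,
          Finset.mul_sum]

lemma opNorm_fin_two (W : Matrix (Fin 2) n ℂ) :
    opNorm W = √(topEigenvalue (∑ j, normSq (W 0 j)) (∑ j, normSq (W 1 j))
      (∑ j, W 0 j * conj (W 1 j))) := by
  rw [← opNorm_conjTranspose]
  obtain ⟨z, hz, hzeq⟩ := exists_gramForm_eq (∑ j, normSq (W 0 j)) (∑ j, normSq (W 1 j))
    (∑ j, W 0 j * conj (W 1 j))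
  refine opNorm_eq_sqrt _ (fun z => ?_) ⟨z, hz, ?_⟩
  · rw [norm_toEuclideanLin_conjTranspose_sq]
    exact gramForm_le _ _ _ z
  · rw [norm_toEuclideanLin_conjTranspose_sq, hzeq]

lemma opNorm_of_fin_two_eq_iff {r s r' s' : n → ℂ}
    (htrace : ∑ j, normSq (r j) + ∑ j, normSq (s j) = ∑ j, normSq (r' j) + ∑ j, normSq (s' j)) :
    opNorm (of ![r, s]) = opNorm (of ![r', s']) ↔ gramDet r s = gramDet r' s' := by
  have hnonneg (u : n → ℂ) : 0 ≤ ∑ j, normSq (u j) := Finset.sum_nonneg fun j _ => normSq_nonneg _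
  simp only [opNorm_fin_two, of_apply, cons_val_zero, cons_val_one, cons_val_fin_one]
  rw [Real.sqrt_inj (topEigenvalue_nonneg _ _ _ (hnonneg r))
      (topEigenvalue_nonneg _ _ _ (hnonneg r')), topEigenvalue_eq_iff _ _ _ htrace, gramDet, gramDet]

end opNorm

lemma opNorm_fromBlocks_of_rows_one_eq_zero {n₁ n₂ : Type*} [Fintype n₁] [Fintype n₂]
    [DecidableEq n₁] [DecidableEq n₂] {A C : Matrix (Fin 2) n₁ ℂ} {B D : Matrix (Fin 2) n₂ ℂ}
    (hA : ∀ j, A 1 j = 0) (hB : ∀ j, B 1 j = 0) (hC : ∀ j, C 1 j = 0) (hD : ∀ j, D 1 j = 0) :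
    opNorm (fromBlocks A B C D) = opNorm (of ![Sum.elim (A 0) (B 0), Sum.elim (C 0) (D 0)]) := by
  rw [← opNorm_submatrix_of_eq_zero _ (e := ![Sum.inl 0, Sum.inr 0]) (by decide)]
  · congr 1
    ext i j
    fin_cases i <;> rcases j with j | j <;> rfl
  · rintro (i | i) hi <;> fin_cases i
    · exact absurd ⟨0, rfl⟩ hi
    · ext (j | j) <;> simp [hA, hB]
    · exact absurd ⟨1, rfl⟩ hi
    · ext (j | j) <;> simp [hC, hD]

lemma sub_mul_sub_ne_zero_of_linearIndependent {K : Type*} [Field K] {u v : Fin 2 → K}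
    (h : LinearIndependent K ![u, v]) : u 0 * v 1 - u 1 * v 0 ≠ 0 := by
  have hunit := (linearIndependent_rows_iff_isUnit (A := of ![u, v])).1 h
  rw [isUnit_iff_isUnit_det, det_fin_two] at hunit
  simpa using hunit.ne_zero

lemma gramDet_sub_gramDet (b : ℝ) (c d : ℂ) (u v : Fin 2 → ℂ) :
    gramDet (Sum.elim (u + v) ((b : ℂ) • v)) (Sum.elim (c • v) (d • u))
      - gramDet (Sum.elim (u + v) (c • v)) (Sum.elim ((b : ℂ) • v) (d • u))
      = (b ^ 2 - normSq c) * (normSq d - 1) * normSq (u 0 * v 1 - u 1 * v 0) := by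
  simp only [gramDet, Fintype.sum_sum_type, Fin.sum_univ_two, Sum.elim_inl, Sum.elim_inr,
    Pi.add_apply, Pi.smul_apply, smul_eq_mul, normSq_apply, map_mul, add_re, add_im,
    mul_re, mul_im, sub_re, sub_im, conj_re, conj_im, ofReal_re, ofReal_im]
  ring

/-- For linearly independent `v₁, v₂ ∈ ℂ²`, `V₁, V₂` the 2×2 matrices with first rows
`v₁, v₂` and zero second rows, `V₃ = V₁ + V₂`, the 4×4 block matrices
`M = [[V₃, bV₂],[cV₂, d₂V₁]]` and `M′ = [[V₃, cV₂],[bV₂, d₂V₁]]` have equal operator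
norms iff `|d₂| = 1` or `b = |c|`. -/
theorem stmt14 (b : ℝ) (hb : 0 ≤ b) (c d2 : ℂ)
    (v1 v2 : Fin 2 → ℂ) (hli : LinearIndependent ℂ ![v1, v2])
    (V1 V2 V3 : Matrix (Fin 2) (Fin 2) ℂ)
    (hV1 : V1 = !![v1 0, v1 1; 0, 0])
    (hV2 : V2 = !![v2 0, v2 1; 0, 0])
    (hV3 : V3 = V1 + V2) :
    opNorm (Matrix.fromBlocks V3 ((b : ℂ) • V2) (c • V2) (d2 • V1))
        = opNorm (Matrix.fromBlocks V3 (c • V2) ((b : ℂ) • V2) (d2 • V1))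
      ↔ ‖d2‖ = 1 ∨ b = ‖c‖ := by
  have hdet := sub_mul_sub_ne_zero_of_linearIndependent hli
  have hrows (x y : ℂ) : opNorm (fromBlocks V3 (x • V2) (y • V2) (d2 • V1))
      = opNorm (of ![Sum.elim (v1 + v2) (x • v2), Sum.elim (y • v2) (d2 • v1)]) := by
    subst hV1 hV2 hV3
    rw [opNorm_fromBlocks_of_rows_one_eq_zero]
    · congr 1
      ext i (j | j) <;> fin_cases i <;> fin_cases j <;> simp
    all_goals simp [Fin.forall_fin_two]
  rw [hrows, hrows, opNorm_of_fin_two_eq_iff ?trace, ← sub_eq_zero, gramDet_sub_gramDet]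
  case trace =>
    simp [Fintype.sum_sum_type]
    ring
  rw [mul_eq_zero, mul_eq_zero, or_iff_left (normSq_eq_zero.not.2 hdet), or_comm, sub_eq_zero,
    sub_eq_zero, normSq_eq_norm_sq, normSq_eq_norm_sq, pow_eq_one_iff_of_nonneg (norm_nonneg d2)
    two_ne_zero, sq_eq_sq₀ hb (norm_nonneg c)]
end

section
/- Let α₁, α₂ ∈ ℂ, let V₁, V₂ be k×k complex matrices, and let B be a nonzero m×n complex matrix. Then the operator norm of the block matrix [[α₁·(V₁ ⊗ I_m), V₂ ⊗ B],[0, α₂·(V₁ ⊗ I_n)]] equals the operator norm of the 2k×2k block matrix [[α₁·V₁, ‖B‖_op·V₂],[0, α₂·V₁]]; in particular it depends on B only through its operator norm. (Consequently, the operator space structure induced on the normed space V_A, A = (diag(α₁,α₂), β·E₁₂), by an embedding using any B with ‖B‖_op = |β| is independent of the choice of B.) -/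
/-!
Write `T(B) = kronBlock α₁ α₂ V₁ V₂ B = [[α₁ (V₁ ⊗ 1), V₂ ⊗ B], [0, α₂ (V₁ ⊗ 1)]]`, affine in
`B`. If `X` and `Y` are isometries with `B X = Y C`, then `1 ⊗ X` and `1 ⊗ Y` intertwine `T(B)`
with `T(C)`, so `T(C)` is a compression of `T(B)` and `‖T(C)‖ ≤ ‖T(B)‖`.

For the lower bound, pick a unit vector `u` with `‖B u‖ = ‖B‖`; then `B u = ‖B‖ w` with `w` a unit
vector, which compresses `T(B)` to `T(‖B‖)` built on the `1 × 1` matrix `‖B‖`. For the upper bound,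
`T(B)` is a compression of `T` of the Hermitian dilation `[[0, B], [Bᴴ, 0]]`, which has norm at
most `‖B‖` and is unitarily equivalent to a real diagonal matrix `D` with entries in
`[-‖B‖, ‖B‖]`. Such a `D` is the average of two diagonal matrices `Z` with `Zᴴ Z = ‖B‖² • 1`, and
each `T(Z)` is a compression of `T(‖B‖ • 1)`. Finally `T(s • 1_N)` is a reindexing of
`[[α₁ V₁, s V₂], [0, α₂ V₁]] ⊗ 1_N`, and `A ↦ A ⊗ 1_N` is an injective ⋆-homomorphism of
C⋆-algebras, hence isometric.
-/

open scoped Kronecker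

open scoped Matrix.Norms.L2Operator

theorem ContinuousLinearMap.exists_norm_eq_one_norm_apply_eq_opNorm_s15 {𝕜 E F : Type*} [RCLike 𝕜]
    [NormedAddCommGroup E] [NormedSpace 𝕜 E] [ProperSpace E] [Nontrivial E]
    [NormedAddCommGroup F] [NormedSpace 𝕜 F] (f : E →L[𝕜] F) :
    ∃ x, ‖x‖ = 1 ∧ ‖f x‖ = ‖f‖ := by
  have hK := (isCompact_sphere (0 : E) 1).image (continuous_norm.comp f.continuous)
  let _ : NormedSpace ℝ E := NormedSpace.restrictScalars ℝ 𝕜 E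
  have hne : (Metric.sphere (0 : E) 1).Nonempty := NormedSpace.sphere_nonempty.mpr zero_le_one
  obtain ⟨x, hx, hfx⟩ := hK.sSup_mem (hne.image _)
  exact ⟨x, mem_sphere_zero_iff_norm.mp hx, hfx.trans f.sSup_sphere_eq_norm⟩

namespace Matrix

section
variable {R l p q r s : Type*} [CommRing R] [StarRing R]

lemma one_kronecker_conjTranspose_mul_self_eq_one [Fintype l] [DecidableEq l] [Fintype p]
    [DecidableEq q] {Z : Matrix p q R} (hZ : Zᴴ * Z = 1) :
    ((1 : Matrix l l R) ⊗ₖ Z)ᴴ * ((1 : Matrix l l R) ⊗ₖ Z) = 1 := by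
  rw [conjTranspose_kronecker, conjTranspose_one, ← mul_kronecker_mul, Matrix.one_mul, hZ,
    one_kronecker_one]

lemma fromBlocks_zero_conjTranspose_mul_self_eq_one [Fintype p] [Fintype r] [DecidableEq q]
    [DecidableEq s] {A : Matrix p q R} {D : Matrix r s R} (hA : Aᴴ * A = 1) (hD : Dᴴ * D = 1) :
    (fromBlocks A 0 0 D)ᴴ * fromBlocks A 0 0 D = 1 := by
  simp [fromBlocks_conjTranspose, fromBlocks_multiply, hA, hD]

end

section
variable {𝕜 m n m' n' : Type*} [RCLike 𝕜] [Fintype m] [Fintype n] [Fintype m'] [Fintype n']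

lemma l2_opNorm_le_one_of_conjTranspose_mul_self_eq_one [DecidableEq n] {X : Matrix m n 𝕜}
    (hX : Xᴴ * X = 1) : ‖X‖ ≤ 1 := by
  have h1 : ‖(1 : Matrix n n 𝕜)‖ ≤ 1 := by
    rw [← diagonal_one, l2_opNorm_diagonal]
    exact (pi_norm_const_le (1 : 𝕜)).trans norm_one.le
  have h := l2_opNorm_conjTranspose_mul_self X
  rw [hX] at h
  nlinarith [norm_nonneg X]

lemma l2_opNorm_le_of_mul_eq_mul [DecidableEq m] [DecidableEq n] [DecidableEq n']
    {A : Matrix m n 𝕜} {A' : Matrix m' n' 𝕜}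
    {X : Matrix n' n 𝕜} {Y : Matrix m' m 𝕜} (hX : Xᴴ * X = 1) (hY : Yᴴ * Y = 1)
    (h : A' * X = Y * A) : ‖A‖ ≤ ‖A'‖ := by
  classical
  have hA : A = Yᴴ * A' * X := by
    rw [Matrix.mul_assoc, h, ← Matrix.mul_assoc, hY, Matrix.one_mul]
  have hYH : ‖Yᴴ‖ ≤ 1 := (l2_opNorm_conjTranspose Y).trans_le
    (l2_opNorm_le_one_of_conjTranspose_mul_self_eq_one hY)
  calc ‖A‖ = ‖Yᴴ * A' * X‖ := by rw [← hA]
    _ ≤ ‖Yᴴ‖ * ‖A'‖ * ‖X‖ := (l2_opNorm_mul _ _).trans (by gcongr; exact l2_opNorm_mul _ _)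
    _ ≤ 1 * ‖A'‖ * 1 := by gcongr; exact l2_opNorm_le_one_of_conjTranspose_mul_self_eq_one hX
    _ = ‖A'‖ := by ring

lemma replicateCol_conjTranspose_mul_self_eq_one {u : EuclideanSpace 𝕜 n} (hu : ‖u‖ = 1) :
    (replicateCol Unit u.ofLp)ᴴ * replicateCol Unit u.ofLp = 1 := by
  ext i j
  rw [conjTranspose_replicateCol, replicateRow_mul_replicateCol, of_apply, dotProduct_comm,
    ← EuclideanSpace.inner_eq_star_dotProduct, inner_self_eq_norm_sq_to_K, hu]
  simp

lemma IsHermitian.abs_eigenvalues_le_l2_opNorm [DecidableEq n] {H : Matrix n n 𝕜}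
    (hH : H.IsHermitian) (i : n) : |hH.eigenvalues i| ≤ ‖H‖ := by
  have h := l2_opNorm_mulVec H (hH.eigenvectorBasis i)
  rw [hH.mulVec_eigenvectorBasis, hH.eigenvectorBasis.orthonormal.1 i, mul_one] at h
  simpa [norm_smul] using h

end

section
variable {n N ι κ : Type*} [Fintype n] [DecidableEq n] [Fintype N] [DecidableEq N]
  [Fintype ι] [DecidableEq ι] [Fintype κ] [DecidableEq κ]

variable (n N) in
def kroneckerOneStarAlgHom : Matrix n n ℂ →⋆ₐ[ℂ] Matrix (n × N) (n × N) ℂ where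
  toFun A := A ⊗ₖ (1 : Matrix N N ℂ)
  map_one' := one_kronecker_one
  map_mul' A B := by rw [← mul_kronecker_mul, Matrix.mul_one]
  map_zero' := zero_kronecker _
  map_add' A B := add_kronecker _ _ _
  commutes' c := by simp [Algebra.algebraMap_eq_smul_one, smul_kronecker]
  map_star' A := by simp [star_eq_conjTranspose, conjTranspose_kronecker]

lemma l2_opNorm_kronecker_one [Nonempty N] (A : Matrix n n ℂ) :
    ‖A ⊗ₖ (1 : Matrix N N ℂ)‖ = ‖A‖ := by
  refine NonUnitalStarAlgHom.norm_map (kroneckerOneStarAlgHom n N) (fun A B h => ?_) A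
  obtain ⟨j⟩ := ‹Nonempty N›
  ext a b
  simpa [kroneckerOneStarAlgHom] using congrFun (congrFun h (a, j)) (b, j)

variable (n) in
def reindexStarAlgEquiv (e : n ≃ N) : Matrix n n ℂ ≃⋆ₐ[ℂ] Matrix N N ℂ :=
  .ofAlgEquiv (reindexAlgEquiv ℂ ℂ e) fun A => by simp [star_eq_conjTranspose]

lemma l2_opNorm_reindex (e : n ≃ N) (A : Matrix n n ℂ) : ‖reindex e e A‖ = ‖A‖ :=
  StarAlgEquiv.norm_map (reindexStarAlgEquiv n e) A

variable (ι κ) in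
def fromBlocksDiagonalStarAlgHom :
    Matrix ι ι ℂ × Matrix κ κ ℂ →⋆ₐ[ℂ] Matrix (ι ⊕ κ) (ι ⊕ κ) ℂ where
  toFun A := fromBlocks A.1 0 0 A.2
  map_one' := fromBlocks_one
  map_mul' A B := by simp [fromBlocks_multiply]
  map_zero' := fromBlocks_zero
  map_add' A B := by simp [fromBlocks_add]
  commutes' c := by simp [algebraMap_eq_diagonal]
  map_star' A := by simp [star_eq_conjTranspose, fromBlocks_conjTranspose]

lemma l2_opNorm_fromBlocks_zero_le (A : Matrix ι ι ℂ) (D : Matrix κ κ ℂ) :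
    ‖fromBlocks A 0 0 D‖ ≤ max ‖A‖ ‖D‖ :=
  NonUnitalStarAlgHom.norm_apply_le (fromBlocksDiagonalStarAlgHom ι κ) (A, D)

lemma l2_opNorm_fromBlocks_zero_conjTranspose_le (B : Matrix ι κ ℂ) :
    ‖fromBlocks 0 B Bᴴ 0‖ ≤ ‖B‖ := by
  have hsq : ‖fromBlocks 0 B Bᴴ 0‖ * ‖fromBlocks 0 B Bᴴ 0‖ ≤ ‖B‖ * ‖B‖ := by
    rw [← l2_opNorm_conjTranspose_mul_self, fromBlocks_conjTranspose, fromBlocks_multiply]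
    simp only [conjTranspose_zero, conjTranspose_conjTranspose, Matrix.zero_mul, Matrix.mul_zero,
      zero_add, add_zero]
    refine (l2_opNorm_fromBlocks_zero_le _ _).trans (max_le ?_ ?_)
    · rw [← l2_opNorm_conjTranspose B, ← l2_opNorm_conjTranspose_mul_self Bᴴ,
        conjTranspose_conjTranspose]
    · rw [l2_opNorm_conjTranspose_mul_self]
  exact (mul_self_le_mul_self_iff (norm_nonneg _) (norm_nonneg _)).mpr hsq

end

end Matrix

open Matrix

def kronBlock {K ι κ : Type*} [DecidableEq ι] [DecidableEq κ] (α₁ α₂ : ℂ)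
    (V₁ V₂ : Matrix K K ℂ) (B : Matrix ι κ ℂ) : Matrix (K × ι ⊕ K × κ) (K × ι ⊕ K × κ) ℂ :=
  fromBlocks (α₁ • (V₁ ⊗ₖ 1)) (V₂ ⊗ₖ B) 0 (α₂ • (V₁ ⊗ₖ 1))

section KronBlock
variable {K ι κ N : Type*} [DecidableEq ι] [DecidableEq κ] [DecidableEq N] (α₁ α₂ : ℂ)
  (V₁ V₂ : Matrix K K ℂ)

lemma kronBlock_midpoint (B C : Matrix ι κ ℂ) :
    kronBlock α₁ α₂ V₁ V₂ ((2⁻¹ : ℂ) • (B + C))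
      = (2⁻¹ : ℂ) • (kronBlock α₁ α₂ V₁ V₂ B + kronBlock α₁ α₂ V₁ V₂ C) := by
  simp only [kronBlock, fromBlocks_add, fromBlocks_smul, kronecker_smul, kronecker_add]
  congr 1 <;> module

lemma kronBlock_smul_one (c : ℂ) :
    kronBlock α₁ α₂ V₁ V₂ (c • 1 : Matrix N N ℂ) = reindex (Equiv.sumProdDistrib K K N)
      (Equiv.sumProdDistrib K K N) (fromBlocks (α₁ • V₁) (c • V₂) 0 (α₂ • V₁) ⊗ₖ 1) := by
  ext (⟨a, i⟩ | ⟨a, i⟩) (⟨b, j⟩ | ⟨b, j⟩) <;> simp [kronBlock, one_apply, mul_comm]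

variable [Fintype K] [DecidableEq K] [Fintype ι] [Fintype κ] [Fintype N]
  {ι' κ' : Type*} [Fintype ι'] [DecidableEq ι'] [Fintype κ'] [DecidableEq κ']

lemma kronBlock_mul_fromBlocks {B : Matrix ι κ ℂ} {C : Matrix ι' κ' ℂ} {X : Matrix κ κ' ℂ}
    {Y : Matrix ι ι' ℂ} (h : B * X = Y * C) :
    kronBlock α₁ α₂ V₁ V₂ B * fromBlocks ((1 : Matrix K K ℂ) ⊗ₖ Y) 0 0 ((1 : Matrix K K ℂ) ⊗ₖ X)
      = fromBlocks ((1 : Matrix K K ℂ) ⊗ₖ Y) 0 0 ((1 : Matrix K K ℂ) ⊗ₖ X)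
        * kronBlock α₁ α₂ V₁ V₂ C := by
  simp only [kronBlock, fromBlocks_multiply, Matrix.mul_zero, Matrix.zero_mul, add_zero, zero_add,
    Matrix.smul_mul, Matrix.mul_smul, ← mul_kronecker_mul, Matrix.mul_one, Matrix.one_mul,
    smul_zero, h]

lemma norm_kronBlock_le_of_mul_eq_mul {B : Matrix ι κ ℂ} {C : Matrix ι' κ' ℂ}
    {X : Matrix κ κ' ℂ} {Y : Matrix ι ι' ℂ} (hX : Xᴴ * X = 1) (hY : Yᴴ * Y = 1)
    (h : B * X = Y * C) : ‖kronBlock α₁ α₂ V₁ V₂ C‖ ≤ ‖kronBlock α₁ α₂ V₁ V₂ B‖ := by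
  refine l2_opNorm_le_of_mul_eq_mul ?_ ?_ (kronBlock_mul_fromBlocks α₁ α₂ V₁ V₂ h) <;>
  · exact fromBlocks_zero_conjTranspose_mul_self_eq_one
      (one_kronecker_conjTranspose_mul_self_eq_one hY)
      (one_kronecker_conjTranspose_mul_self_eq_one hX)

lemma norm_kronBlock_smul_one [Nonempty N] (c : ℂ) :
    ‖kronBlock α₁ α₂ V₁ V₂ (c • 1 : Matrix N N ℂ)‖
      = ‖fromBlocks (α₁ • V₁) (c • V₂) 0 (α₂ • V₁)‖ := by
  rw [kronBlock_smul_one, l2_opNorm_reindex, l2_opNorm_kronecker_one]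

lemma norm_kronBlock_le_of_conjTranspose_mul_self {C : Matrix N N ℂ} {t : ℝ}
    (hC : Cᴴ * C = ((t : ℂ) ^ 2) • 1) :
    ‖kronBlock α₁ α₂ V₁ V₂ C‖ ≤ ‖kronBlock α₁ α₂ V₁ V₂ ((t : ℂ) • 1 : Matrix N N ℂ)‖ := by
  rcases eq_or_ne t 0 with rfl | ht
  · have hC0 : C = 0 := by
      open scoped ComplexOrder in exact conjTranspose_mul_self_eq_zero.mp (by simpa using hC)
    simp [hC0]
  have ht' : (t : ℂ) ≠ 0 := by exact_mod_cast ht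
  refine norm_kronBlock_le_of_mul_eq_mul α₁ α₂ V₁ V₂ (X := (t⁻¹ : ℂ) • C) (Y := 1) ?_ (by simp) ?_
  · rw [conjTranspose_smul, smul_mul_smul, hC, smul_smul, star_inv₀, Complex.star_def,
      Complex.conj_ofReal]
    field_simp
    simp
  · rw [smul_mul_smul, Matrix.one_mul, mul_inv_cancel₀ ht', one_smul]

lemma norm_kronBlock_diagonal_le {d : N → ℝ} {t : ℝ} (hd : ∀ i, |d i| ≤ t) :
    ‖kronBlock α₁ α₂ V₁ V₂ (diagonal fun i => (d i : ℂ))‖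
      ≤ ‖kronBlock α₁ α₂ V₁ V₂ ((t : ℂ) • 1 : Matrix N N ℂ)‖ := by
  -- `d i = re (z i)` and `‖z i‖ = t`, so `diagonal d` is the mean of `diagonal z` and its conjugate
  set z : N → ℂ := fun i => ⟨d i, √(t ^ 2 - d i ^ 2)⟩
  have hnormSq : ∀ i, Complex.normSq (z i) = t ^ 2 := fun i => by
    have := sq_le_sq' (abs_le.mp (hd i)).1 (abs_le.mp (hd i)).2
    simp [z, Complex.normSq_apply, ← sq, Real.sq_sqrt (sub_nonneg.mpr this)]
  have hbound : ∀ w : N → ℂ, (∀ i, Complex.normSq (w i) = t ^ 2) →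
      ‖kronBlock α₁ α₂ V₁ V₂ (diagonal w)‖
        ≤ ‖kronBlock α₁ α₂ V₁ V₂ ((t : ℂ) • 1 : Matrix N N ℂ)‖ :=
    fun w hw => norm_kronBlock_le_of_conjTranspose_mul_self α₁ α₂ V₁ V₂ <| by
      rw [diagonal_conjTranspose, diagonal_mul_diagonal, smul_one_eq_diagonal]
      congr 1
      funext i
      rw [Pi.star_apply, Complex.star_def, mul_comm, Complex.mul_conj, hw]
      push_cast; rfl
  have hmid : (diagonal fun i => (d i : ℂ)) = (2⁻¹ : ℂ) • (diagonal z + diagonal (star z)) := by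
    rw [diagonal_add, ← diagonal_smul]
    congr 1
    funext i
    apply Complex.ext
    · simp [z]
      ring
    · simp [z]
  rw [hmid, kronBlock_midpoint, norm_smul, norm_inv, Complex.norm_two]
  have h₁ := hbound z hnormSq
  have h₂ := hbound (star z) fun i => by simpa using hnormSq i
  have h₃ := norm_add_le (kronBlock α₁ α₂ V₁ V₂ (diagonal z))
    (kronBlock α₁ α₂ V₁ V₂ (diagonal (star z)))
  linarith

lemma norm_kronBlock_le_of_isHermitian {H : Matrix N N ℂ} (hH : H.IsHermitian) {t : ℝ}
    (ht : ‖H‖ ≤ t) :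
    ‖kronBlock α₁ α₂ V₁ V₂ H‖ ≤ ‖kronBlock α₁ α₂ V₁ V₂ ((t : ℂ) • 1 : Matrix N N ℂ)‖ := by
  set U : Matrix N N ℂ := (hH.eigenvectorUnitary : Matrix N N ℂ)
  set D : Matrix N N ℂ := diagonal fun i => (hH.eigenvalues i : ℂ)
  have hspec : H = U * D * Uᴴ := by
    simpa [Unitary.conjStarAlgAut_apply, star_eq_conjTranspose, Function.comp_def] using
      hH.spectral_theorem
  have hU : Uᴴ * U = 1 := mem_unitaryGroup_iff'.mp hH.eigenvectorUnitary.2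
  have hUH : (Uᴴ)ᴴ * Uᴴ = 1 := by
    rw [conjTranspose_conjTranspose]
    exact mem_unitaryGroup_iff.mp hH.eigenvectorUnitary.2
  calc ‖kronBlock α₁ α₂ V₁ V₂ H‖ ≤ ‖kronBlock α₁ α₂ V₁ V₂ D‖ :=
        norm_kronBlock_le_of_mul_eq_mul α₁ α₂ V₁ V₂ hUH hUH (by
          rw [hspec, ← Matrix.mul_assoc, ← Matrix.mul_assoc, hU, Matrix.one_mul])
    _ ≤ _ := norm_kronBlock_diagonal_le α₁ α₂ V₁ V₂ fun i =>
        (hH.abs_eigenvalues_le_l2_opNorm i).trans ht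

lemma norm_kronBlock_le_kronBlock_fromBlocks (B : Matrix ι κ ℂ) :
    ‖kronBlock α₁ α₂ V₁ V₂ B‖ ≤ ‖kronBlock α₁ α₂ V₁ V₂ (fromBlocks 0 B Bᴴ 0)‖ :=
  norm_kronBlock_le_of_mul_eq_mul α₁ α₂ V₁ V₂ (X := fromRows 0 1) (Y := fromRows 1 0)
    (by simp [conjTranspose_fromRows_eq_fromCols_conjTranspose, fromCols_mul_fromRows])
    (by simp [conjTranspose_fromRows_eq_fromCols_conjTranspose, fromCols_mul_fromRows])
    (by simp [fromBlocks_mul_fromRows, fromRows_mul])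

lemma norm_kronBlock_norm_smul_one_le {B : Matrix ι κ ℂ} (hB : B ≠ 0) :
    ‖kronBlock α₁ α₂ V₁ V₂ ((‖B‖ : ℂ) • 1 : Matrix Unit Unit ℂ)‖
      ≤ ‖kronBlock α₁ α₂ V₁ V₂ B‖ := by
  have : Nonempty κ := by
    by_contra h
    exact hB (Matrix.ext fun _ j => (not_nonempty_iff.mp h).elim j)
  obtain ⟨u, hu, hBu⟩ :=
    ((toEuclideanLin (𝕜 := ℂ) (m := ι) (n := κ)).trans LinearMap.toContinuousLinearMap
      B).exists_norm_eq_one_norm_apply_eq_opNorm_s15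
  have hB0 : (‖B‖ : ℂ) ≠ 0 := by exact_mod_cast norm_ne_zero_iff.mpr hB
  set w : EuclideanSpace ℂ ι := (‖B‖⁻¹ : ℂ) • WithLp.toLp 2 (B *ᵥ u.ofLp)
  have hw : ‖w‖ = 1 := by
    rw [norm_smul, norm_inv, Complex.norm_real, norm_norm]
    exact inv_mul_eq_one₀ (norm_ne_zero_iff.mpr hB) |>.mpr hBu.symm
  refine norm_kronBlock_le_of_mul_eq_mul α₁ α₂ V₁ V₂ (X := replicateCol Unit u.ofLp)
    (Y := replicateCol Unit w.ofLp) (replicateCol_conjTranspose_mul_self_eq_one hu)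
    (replicateCol_conjTranspose_mul_self_eq_one hw) ?_
  rw [← replicateCol_mulVec, Matrix.mul_smul, Matrix.mul_one, ← replicateCol_smul]
  congr 1
  simp [w, smul_smul, mul_inv_cancel₀ hB0]

end KronBlock

/-- The operator norm of the block matrix
`[[α₁ (V₁ ⊗ I_m), V₂ ⊗ B],[0, α₂ (V₁ ⊗ I_n)]]` depends on the nonzero matrix `B` only
through its operator norm: it equals the operator norm of
`[[α₁ V₁, ‖B‖ V₂],[0, α₂ V₁]]`. -/
theorem stmt15 {k m n : ℕ} (α₁ α₂ : ℂ)
    (V1 V2 : Matrix (Fin k) (Fin k) ℂ)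
    (B : Matrix (Fin m) (Fin n) ℂ) (hB : B ≠ 0) :
    opNorm (Matrix.fromBlocks
        (α₁ • (V1 ⊗ₖ (1 : Matrix (Fin m) (Fin m) ℂ))) (V2 ⊗ₖ B)
        0 (α₂ • (V1 ⊗ₖ (1 : Matrix (Fin n) (Fin n) ℂ))))
      = opNorm (Matrix.fromBlocks (α₁ • V1) ((opNorm B : ℂ) • V2) 0 (α₂ • V1)) := by
  have : Nonempty (Fin m ⊕ Fin n) := by
    by_contra h
    exact hB (Matrix.ext fun i _ => (not_nonempty_iff.mp h).elim (.inl i))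
  show ‖kronBlock α₁ α₂ V1 V2 B‖ = ‖fromBlocks (α₁ • V1) ((‖B‖ : ℂ) • V2) 0 (α₂ • V1)‖
  refine le_antisymm ?_ ?_
  · calc ‖kronBlock α₁ α₂ V1 V2 B‖
          ≤ ‖kronBlock α₁ α₂ V1 V2 (fromBlocks 0 B Bᴴ 0)‖ :=
          norm_kronBlock_le_kronBlock_fromBlocks α₁ α₂ V1 V2 B
      _ ≤ ‖kronBlock α₁ α₂ V1 V2 ((‖B‖ : ℂ) • 1 : Matrix (Fin m ⊕ Fin n) (Fin m ⊕ Fin n) ℂ)‖ :=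
          norm_kronBlock_le_of_isHermitian α₁ α₂ V1 V2
            (isHermitian_zero.fromBlocks rfl isHermitian_zero)
            (l2_opNorm_fromBlocks_zero_conjTranspose_le B)
      _ = _ := norm_kronBlock_smul_one α₁ α₂ V1 V2 _
  · rw [← norm_kronBlock_smul_one α₁ α₂ V1 V2 (N := Unit)]
    exact norm_kronBlock_norm_smul_one_le α₁ α₂ V1 V2 hB
end

section
/- Let Ω = {(z₁, z₂, z₃) ∈ ℂ³ : |z₁| ≤ 1, |z₃| ≤ 1, and |z₂|² ≤ (1 − |z₁|²)(1 − |z₃|²)}. Then for all nonnegative integers n, m, p, ∫_Ω |z₁|^{2n} |z₂|^{2m} |z₃|^{2p} dV(z) = π³ · (n!·(m+1)!/(n+m+2)!) · (p!·(m+1)!/(p+m+2)!) / (m+1), where dV is Lebesgue measure on ℂ³ ≅ ℝ⁶. (These are the squared norms of the monomials z₁ⁿz₂ᵐz₃ᵖ in the Bergman space of Ω; note n!·(m+1)!/(n+m+2)! = β(n+1, m+2) is the Beta function.) -/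
/-!
`Ω` is a Hartogs domain over the closed bidisc: its fibre over `(z₁, z₃)` is the disc
`|z₂|² ≤ ρ = (1 - |z₁|²)(1 - |z₃|²)`. By Fubini, integrating `|z₂|^{2m}` over that disc
first gives `π ρ^{m+1}/(m+1)`, which is a product of a function of `z₁` and one of `z₃`.
Each factor is a radial integral over the unit disc, which the substitution `u = |w|²` turns
into the Beta integral `π ∫₀¹ u^k (1 - u)^{m+1} du`.
-/

open MeasureTheory Set Metric
open scoped Nat Real

open Complex in
theorem integral_pow_mul_one_sub_pow (k l : ℕ) :
    ∫ x in (0 : ℝ)..1, x ^ k * (1 - x) ^ l = (k ! * l ! / (k + l + 1)! : ℝ) := by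
  have hΓ := Gamma_mul_Gamma_eq_betaIntegral (s := k + 1) (t := l + 1)
    (by simp; positivity) (by simp; positivity)
  have hsum : (k + 1 : ℂ) + (l + 1) = ↑(k + l + 1) + 1 := by push_cast; ring
  have hB : betaIntegral (k + 1) (l + 1)
      = ((∫ x in (0 : ℝ)..1, x ^ k * (1 - x) ^ l : ℝ) : ℂ) := by
    simp only [betaIntegral, add_sub_cancel_right, cpow_natCast,
      intervalIntegral.integral_ofReal.symm]
    push_cast
    rfl
  rw [hsum, Gamma_nat_eq_factorial, Gamma_nat_eq_factorial, Gamma_nat_eq_factorial, hB] at hΓ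
  rw [eq_div_iff (by positivity)]
  exact_mod_cast (hΓ.trans (mul_comm _ _)).symm

theorem integral_fun_norm_complex (g : ℝ → ℝ) :
    ∫ w : ℂ, g ‖w‖ = 2 * π * ∫ y in Ioi (0 : ℝ), y * g y := by
  rw [integral_fun_norm_addHaar volume g, Complex.finrank_real_complex, measureReal_def,
    Complex.volume_ball]
  simp [mul_assoc]

theorem setIntegral_closedBall_comp_norm_sq (f : ℝ → ℝ) (hf : Continuous f) {r : ℝ}
    (hr : 0 ≤ r) :
    ∫ w in closedBall (0 : ℂ) r, f (‖w‖ ^ 2) = π * ∫ u in (0 : ℝ)..r ^ 2, f u := by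
  have hsubst : ∫ y in (0 : ℝ)..r, f (y ^ 2) * (2 * y) = ∫ u in (0 : ℝ)..r ^ 2, f u := by
    have h := intervalIntegral.integral_comp_mul_deriv (a := 0) (b := r)
      (fun y _ => by simpa using hasDerivAt_pow 2 y) (by fun_prop) hf
    rwa [zero_pow two_ne_zero] at h
  have hind (w : ℂ) : (closedBall 0 r).indicator (fun w => f (‖w‖ ^ 2)) w
      = (Iic r).indicator (fun y => f (y ^ 2)) ‖w‖ := by
    by_cases hw : ‖w‖ ≤ r <;> simp [hw]
  rw [← integral_indicator measurableSet_closedBall, funext hind, integral_fun_norm_complex]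
  simp_rw [(indicator_mul_right _ (fun y => y) _).symm]
  rw [setIntegral_indicator measurableSet_Iic, Ioi_inter_Iic, ← hsubst,
    intervalIntegral.integral_of_le hr, ← integral_const_mul, ← integral_const_mul]
  congr 1 with y
  ring

theorem setIntegral_closedBall_norm_pow (k : ℕ) {r : ℝ} (hr : 0 ≤ r) :
    ∫ w in closedBall (0 : ℂ) r, ‖w‖ ^ (2 * k) = π * (r ^ 2) ^ (k + 1) / (k + 1) := by
  simp_rw [pow_mul]
  rw [setIntegral_closedBall_comp_norm_sq (· ^ k) (by fun_prop) hr, integral_pow,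
    zero_pow k.succ_ne_zero]
  ring

theorem setIntegral_closedBall_one_norm_pow_mul_one_sub (k l : ℕ) :
    ∫ w in closedBall (0 : ℂ) 1, ‖w‖ ^ (2 * k) * (1 - ‖w‖ ^ 2) ^ l
      = π * (k ! * l ! / (k + l + 1)! : ℝ) := by
  simp_rw [pow_mul]
  rw [setIntegral_closedBall_comp_norm_sq (fun u => u ^ k * (1 - u) ^ l) (by fun_prop)
    zero_le_one, one_pow, integral_pow_mul_one_sub_pow]

def hartogsDomain {X : Type*} (S : Set X) (ρ : X → ℝ) : Set (ℂ × X) :=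
  {q | q.2 ∈ S ∧ ‖q.1‖ ^ 2 ≤ ρ q.2}

theorem isCompact_hartogsDomain {X : Type*} [TopologicalSpace X] [T2Space X] {S : Set X}
    {ρ : X → ℝ} (hS : IsCompact S) (hρ : Continuous ρ) : IsCompact (hartogsDomain S ρ) := by
  obtain ⟨M, hM⟩ := (hS.image hρ).isBounded.bddAbove
  refine (isCompact_closedBall (0 : ℂ) √M |>.prod hS).of_isClosed_subset ?_ ?_
  · exact (hS.isClosed.preimage continuous_snd).inter
      (isClosed_le (by fun_prop : Continuous fun q : ℂ × X => ‖q.1‖ ^ 2)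
        (hρ.comp continuous_snd))
  · rintro ⟨w, x⟩ ⟨hx, hw⟩
    exact ⟨mem_closedBall_zero_iff.2 (Real.le_sqrt_of_sq_le (hw.trans (hM ⟨x, hx, rfl⟩))),
      hx⟩

theorem measurableSet_hartogsDomain {X : Type*} [MeasurableSpace X] {S : Set X} {ρ : X → ℝ}
    (hS : MeasurableSet S) (hρ : Measurable ρ) : MeasurableSet (hartogsDomain S ρ) :=
  (measurable_snd hS).inter (measurableSet_le (by fun_prop) (hρ.comp measurable_snd))

theorem setIntegral_hartogsDomain {X : Type*} [MeasurableSpace X] {μ : Measure X} [SFinite μ]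
    (m : ℕ) {S : Set X} {ρ g : X → ℝ} (hS : MeasurableSet S) (hρ : Measurable ρ)
    (hρ₀ : ∀ x ∈ S, 0 ≤ ρ x)
    (hint : IntegrableOn (fun q : ℂ × X => ‖q.1‖ ^ (2 * m) * g q.2) (hartogsDomain S ρ)
      (volume.prod μ)) :
    ∫ q in hartogsDomain S ρ, ‖q.1‖ ^ (2 * m) * g q.2 ∂(volume.prod μ)
      = π / (m + 1) * ∫ x in S, ρ x ^ (m + 1) * g x ∂μ := by
  have hD := measurableSet_hartogsDomain hS hρ
  have hfibre (x : X) :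
      ∫ w, (hartogsDomain S ρ).indicator (fun q => ‖q.1‖ ^ (2 * m) * g q.2) (w, x)
        = S.indicator (fun x => π / (m + 1) * (ρ x ^ (m + 1) * g x)) x := by
    by_cases hx : x ∈ S
    · have hdisc (w : ℂ) :
          (hartogsDomain S ρ).indicator (fun q => ‖q.1‖ ^ (2 * m) * g q.2) (w, x)
            = (closedBall 0 √(ρ x)).indicator (fun w => ‖w‖ ^ (2 * m)) w * g x := by
        have hiff : ‖w‖ ≤ √(ρ x) ↔ ‖w‖ ^ 2 ≤ ρ x :=
          Real.le_sqrt (norm_nonneg _) (hρ₀ x hx)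
        by_cases hw : ‖w‖ ^ 2 ≤ ρ x
        · simp [hartogsDomain, hx, hw, hiff.2 hw]
        · simp [hartogsDomain, hx, hw, mt hiff.1 hw]
      rw [integral_congr_ae (Filter.Eventually.of_forall hdisc), integral_mul_const,
        integral_indicator measurableSet_closedBall,
        setIntegral_closedBall_norm_pow m (Real.sqrt_nonneg _), Real.sq_sqrt (hρ₀ x hx),
        indicator_of_mem hx]
      ring
    · simp [hartogsDomain, hx]
  rw [← integral_indicator hD, integral_prod_symm _ ((integrable_indicator_iff hD).2 hint)]
  simp_rw [hfibre]
  rw [integral_indicator hS, integral_const_mul]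

noncomputable def middleFirst : (Fin 3 → ℂ) ≃ᵐ ℂ × ℂ × ℂ :=
  (MeasurableEquiv.piFinSuccAbove (fun _ => ℂ) 1).trans
    ((MeasurableEquiv.refl ℂ).prodCongr MeasurableEquiv.finTwoArrow)

theorem middleFirst_apply (z : Fin 3 → ℂ) : middleFirst z = (z 1, z 0, z 2) := rfl

theorem measurePreserving_middleFirst : MeasurePreserving middleFirst :=
  (volume_preserving_piFinSuccAbove (fun _ => ℂ) 1).trans
    ((MeasurePreserving.id volume).prod (volume_preserving_finTwoArrow ℂ))

theorem preimage_middleFirst_hartogsDomain :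
    middleFirst ⁻¹' hartogsDomain (closedBall 0 1 ×ˢ closedBall 0 1)
        (fun x => (1 - ‖x.1‖ ^ 2) * (1 - ‖x.2‖ ^ 2))
      = {z | ‖z 0‖ ≤ 1 ∧ ‖z 2‖ ≤ 1 ∧
          ‖z 1‖ ^ 2 ≤ (1 - ‖z 0‖ ^ 2) * (1 - ‖z 2‖ ^ 2)} := by
  ext z
  simp [hartogsDomain, middleFirst_apply, and_assoc]

theorem setIntegral_hartogsDomain_bidisc (n m p : ℕ) :
    ∫ q in hartogsDomain (closedBall 0 1 ×ˢ closedBall 0 1)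
        (fun x : ℂ × ℂ => (1 - ‖x.1‖ ^ 2) * (1 - ‖x.2‖ ^ 2)),
      ‖q.1‖ ^ (2 * m) * (‖q.2.1‖ ^ (2 * n) * ‖q.2.2‖ ^ (2 * p))
      = π ^ 3 * (n ! * (m + 1)! / (n + m + 2)! : ℝ) * (p ! * (m + 1)! / (p + m + 2)! : ℝ)
          / (m + 1) := by
  have hρ₀ (x : ℂ × ℂ) (hx : x ∈ closedBall 0 1 ×ˢ closedBall 0 1) :
      0 ≤ (1 - ‖x.1‖ ^ 2) * (1 - ‖x.2‖ ^ 2) :=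
    mul_nonneg (sub_nonneg.2 (pow_le_one₀ (norm_nonneg _) (mem_closedBall_zero_iff.1 hx.1)))
      (sub_nonneg.2 (pow_le_one₀ (norm_nonneg _) (mem_closedBall_zero_iff.1 hx.2)))
  have hint := (Continuous.continuousOn (by fun_prop)).integrableOn_compact (μ := volume)
    (f := fun q : ℂ × ℂ × ℂ =>
      ‖q.1‖ ^ (2 * m) * (‖q.2.1‖ ^ (2 * n) * ‖q.2.2‖ ^ (2 * p)))
    (isCompact_hartogsDomain ((isCompact_closedBall 0 1).prod (isCompact_closedBall 0 1))
      (by fun_prop : Continuous fun x : ℂ × ℂ => (1 - ‖x.1‖ ^ 2) * (1 - ‖x.2‖ ^ 2)))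
  have hsplit (x : ℂ × ℂ) :
      ((1 - ‖x.1‖ ^ 2) * (1 - ‖x.2‖ ^ 2)) ^ (m + 1)
          * (‖x.1‖ ^ (2 * n) * ‖x.2‖ ^ (2 * p))
        = ‖x.1‖ ^ (2 * n) * (1 - ‖x.1‖ ^ 2) ^ (m + 1)
          * (‖x.2‖ ^ (2 * p) * (1 - ‖x.2‖ ^ 2) ^ (m + 1)) := by
    rw [mul_pow]
    ring
  rw [Measure.volume_eq_prod]
  refine (setIntegral_hartogsDomain (g := fun x => ‖x.1‖ ^ (2 * n) * ‖x.2‖ ^ (2 * p)) m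
    (measurableSet_closedBall.prod measurableSet_closedBall) (by fun_prop) hρ₀ hint).trans ?_
  simp_rw [hsplit]
  rw [Measure.volume_eq_prod,
    setIntegral_prod_mul (fun w : ℂ => ‖w‖ ^ (2 * n) * (1 - ‖w‖ ^ 2) ^ (m + 1))
      (fun w : ℂ => ‖w‖ ^ (2 * p) * (1 - ‖w‖ ^ 2) ^ (m + 1)),
    setIntegral_closedBall_one_norm_pow_mul_one_sub,
    setIntegral_closedBall_one_norm_pow_mul_one_sub, show n + (m + 1) + 1 = n + m + 2 by ring,
    show p + (m + 1) + 1 = p + m + 2 by ring]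
  ring

/-- Squared norms of monomials in the Bergman space of
`Ω = {z ∈ ℂ³ : |z₁| ≤ 1, |z₃| ≤ 1, |z₂|² ≤ (1−|z₁|²)(1−|z₃|²)}`:
`∫_Ω |z₁|^{2n}|z₂|^{2m}|z₃|^{2p} dV = π³ β(n+1, m+2) β(p+1, m+2)/(m+1)`,
where `β(a+1, b+1) = a! b!/(a+b+1)!`. -/
theorem stmt16 (n m p : ℕ) :
    ∫ z in {z : Fin 3 → ℂ | ‖z 0‖ ≤ 1 ∧ ‖z 2‖ ≤ 1 ∧
        ‖z 1‖ ^ 2 ≤ (1 - ‖z 0‖ ^ 2) * (1 - ‖z 2‖ ^ 2)},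
      ‖z 0‖ ^ (2 * n) * ‖z 1‖ ^ (2 * m) * ‖z 2‖ ^ (2 * p)
      = Real.pi ^ 3
          * ((n.factorial : ℝ) * ((m + 1).factorial : ℝ) / ((n + m + 2).factorial : ℝ))
          * ((p.factorial : ℝ) * ((m + 1).factorial : ℝ) / ((p + m + 2).factorial : ℝ))
          / (m + 1) := by
  have hF (z : Fin 3 → ℂ) : ‖z 0‖ ^ (2 * n) * ‖z 1‖ ^ (2 * m) * ‖z 2‖ ^ (2 * p)
      = ‖(middleFirst z).1‖ ^ (2 * m)
        * (‖(middleFirst z).2.1‖ ^ (2 * n) * ‖(middleFirst z).2.2‖ ^ (2 * p)) := by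
    rw [middleFirst_apply]
    ring
  simp_rw [← preimage_middleFirst_hartogsDomain, hF]
  rw [measurePreserving_middleFirst.setIntegral_preimage_emb middleFirst.measurableEmbedding
    (fun q => ‖q.1‖ ^ (2 * m) * (‖q.2.1‖ ^ (2 * n) * ‖q.2.2‖ ^ (2 * p))),
    setIntegral_hartogsDomain_bidisc]
end
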